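/- arXiv:1103.6249 — 7 statements merged into one kernel-verified Lean document; each statement's English description precedes it below -/
import Mathlib

section
/- Let (a_i)_{i≥0} be a sequence of real numbers and C > 0 a constant such that |(a_0 + a_1 + ... + a_{n-1})/n| ≤ C for all n ≥ 1 and |a_i − a_{i−1}| ≤ 2C for all i ≥ 1. Then a_n = o(n), i.e., a_n/n → 0 as n → ∞. -/
open Filter Finset

/-- A real sequence with bounded Cesàro means and bounded consecutive differences
is `o(n)`. -/
theorem cesaro_bounded_diff_bounded_implies_littleo
    (a : ℕ → ℝ) (C : ℝ) (hC : 0 < C)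
    (hmean : ∀ n : ℕ, 1 ≤ n → |(∑ i ∈ Finset.range n, a i) / n| ≤ C)
    (hdiff : ∀ i : ℕ, 1 ≤ i → |a i - a (i - 1)| ≤ 2 * C) :
    Tendsto (fun n : ℕ => a n / n) atTop (nhds 0) := by
  -- partial sums are bounded by C * n
  have hS : ∀ n : ℕ, |∑ i ∈ Finset.range n, a i| ≤ C * n := by
    intro n
    rcases Nat.eq_zero_or_pos n with h | h
    · simp [h]
    · have h1 := hmean n h
      have hn : (0:ℝ) < n := by exact_mod_cast h
      rw [abs_div, abs_of_pos hn, div_le_iff₀ hn] at h1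
      exact h1
  -- consecutive-difference bound telescopes
  have hd : ∀ n k : ℕ, |a (n + k) - a n| ≤ 2 * C * k := by
    intro n k
    induction k with
    | zero => simp
    | succ k ih =>
      have h1 := hdiff (n + k + 1) (by omega)
      simp only [Nat.add_sub_cancel] at h1
      calc |a (n + k + 1) - a n|
          = |(a (n + k + 1) - a (n + k)) + (a (n + k) - a n)| := by
            rw [sub_add_sub_cancel]
        _ ≤ |a (n + k + 1) - a (n + k)| + |a (n + k) - a n| := abs_add_le _ _
        _ ≤ 2 * C + 2 * C * k := add_le_add h1 ih
        _ = 2 * C * ((k : ℕ) + 1 : ℕ) := by push_cast; ring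
  -- key estimate with a general window length k
  have key2 : ∀ n k : ℕ, 1 ≤ k →
      (k:ℝ) * |a n| ≤ 2 * C * k * k + (C * (n + k) + C * n) := by
    intro n k hk1
    have hsum : ∑ i ∈ Finset.range k, a (n + i)
        = (∑ i ∈ Finset.range (n + k), a i) - ∑ i ∈ Finset.range n, a i := by
      have h := Finset.sum_range_add a n k
      linarith
    have hwin : |∑ i ∈ Finset.range k, a (n + i)| ≤ C * (n + k) + C * n := by
      rw [hsum]
      calc |(∑ i ∈ Finset.range (n + k), a i) - ∑ i ∈ Finset.range n, a i|
          ≤ |∑ i ∈ Finset.range (n + k), a i| + |∑ i ∈ Finset.range n, a i| :=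
            abs_sub _ _
        _ ≤ C * (n + k) + C * n := by
            have h1 := hS (n + k); have h2 := hS n; push_cast at *; linarith
    have hdev : |(k:ℝ) * a n - ∑ i ∈ Finset.range k, a (n + i)| ≤ 2 * C * k * k := by
      have heq : (k:ℝ) * a n - ∑ i ∈ Finset.range k, a (n + i)
          = ∑ i ∈ Finset.range k, (a n - a (n + i)) := by
        rw [Finset.sum_sub_distrib]; simp [mul_comm]
      rw [heq]
      calc |∑ i ∈ Finset.range k, (a n - a (n + i))|
          ≤ ∑ i ∈ Finset.range k, |a n - a (n + i)| :=
            Finset.abs_sum_le_sum_abs _ _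
        _ ≤ ∑ i ∈ Finset.range k, (2 * C * k) := by
            apply Finset.sum_le_sum
            intro i hi
            rw [abs_sub_comm]
            refine (hd n i).trans ?_
            have : (i:ℝ) ≤ k := by
              exact_mod_cast (Finset.mem_range.mp hi).le
            nlinarith
        _ = (k:ℝ) * (2 * C * k) := by rw [Finset.sum_const]; simp [mul_comm]
        _ = 2 * C * k * k := by ring
    have h2 : |(k:ℝ) * a n| ≤ 2 * C * k * k + (C * (n + k) + C * n) := by
      calc |(k:ℝ) * a n|
          = |((k:ℝ) * a n - ∑ i ∈ Finset.range k, a (n + i))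
              + ∑ i ∈ Finset.range k, a (n + i)| := by rw [sub_add_cancel]
        _ ≤ |(k:ℝ) * a n - ∑ i ∈ Finset.range k, a (n + i)|
              + |∑ i ∈ Finset.range k, a (n + i)| := abs_add_le _ _
        _ ≤ 2 * C * k * k + (C * (n + k) + C * n) := add_le_add hdev hwin
    have hkpos : (0:ℝ) < k := by exact_mod_cast hk1
    rwa [abs_mul, abs_of_pos hkpos] at h2
  -- key pointwise bound: |a n| ≤ 5 C (sqrt n + 1)
  have key : ∀ n : ℕ, |a n| ≤ 5 * C * (Nat.sqrt n + 1) := by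
    intro n
    obtain ⟨k, hk⟩ : ∃ k : ℕ, k = Nat.sqrt n + 1 := ⟨_, rfl⟩
    have hk1 : 1 ≤ k := by omega
    have hkR : (1:ℝ) ≤ (k:ℝ) := by exact_mod_cast hk1
    have hkpos : (0:ℝ) < k := by linarith
    have hnk : (n:ℝ) ≤ (k:ℝ) * k := by
      have h := Nat.lt_succ_sqrt' n
      have h2 : n < k * k := by
        calc n < (Nat.sqrt n).succ ^ 2 := h
          _ = k * k := by rw [hk, Nat.succ_eq_add_one]; ring
      exact_mod_cast h2.le
    have hka := key2 n k hk1
    have e1 : C * (n:ℝ) ≤ C * ((k:ℝ) * k) := by nlinarith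
    have e2 : C * (k:ℝ) ≤ C * ((k:ℝ) * k) := by nlinarith [mul_pos hC hkpos]
    have hfin : (k:ℝ) * |a n| ≤ (k:ℝ) * (5 * C * k) := by nlinarith
    have hle := le_of_mul_le_mul_left hfin hkpos
    calc |a n| ≤ 5 * C * k := hle
      _ = 5 * C * (Nat.sqrt n + 1) := by rw [hk]; push_cast; ring
  -- squeeze
  apply squeeze_zero_norm' (a := fun n : ℕ => 10 * C / (Nat.sqrt n : ℝ))
  · filter_upwards [eventually_ge_atTop 1] with n hn
    have hn1 : (1:ℝ) ≤ (n:ℝ) := by exact_mod_cast hn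
    have hnpos : (0:ℝ) < n := by linarith
    have hs1 : 1 ≤ Nat.sqrt n := Nat.sqrt_pos.mpr hn
    have hs1R : (1:ℝ) ≤ (Nat.sqrt n : ℝ) := by exact_mod_cast hs1
    have hspos : (0:ℝ) < (Nat.sqrt n : ℝ) := by linarith
    have hsq : (Nat.sqrt n : ℝ) * (Nat.sqrt n : ℝ) ≤ n := by
      have h := Nat.sqrt_le' n
      rw [pow_two] at h
      exact_mod_cast h
    have h1 : ‖a n / n‖ = |a n| / n := by
      rw [Real.norm_eq_abs, abs_div, abs_of_pos hnpos]
    rw [h1, div_le_div_iff₀ hnpos hspos]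
    have hkey := key n
    have h2 : (Nat.sqrt n : ℝ) + 1 ≤ 2 * (Nat.sqrt n : ℝ) := by linarith
    have h3 : |a n| ≤ 10 * C * (Nat.sqrt n : ℝ) := by nlinarith
    have h4 := mul_le_mul_of_nonneg_right h3 hspos.le
    have h5 : 10 * C * (Nat.sqrt n : ℝ) * (Nat.sqrt n : ℝ) ≤ 10 * C * n := by nlinarith
    linarith
  · have h1 : Tendsto (fun n : ℕ => Nat.sqrt n) atTop atTop := by
      apply tendsto_atTop_atTop.mpr
      intro b
      exact ⟨b * b, fun n hn => Nat.le_sqrt.mpr hn⟩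
    have h2 : Tendsto (fun n : ℕ => ((Nat.sqrt n : ℝ))⁻¹) atTop (nhds 0) :=
      tendsto_inv_atTop_zero.comp (tendsto_natCast_atTop_atTop.comp h1)
    have h3 := h2.const_mul (10 * C)
    simpa [div_eq_mul_inv] using h3
end

section
/- Define V : ℝ → ℝ by V(x) = x for x > 0 and V(x) = 0 for x ≤ 0. Then the principal-value integral H(V)(x) = −(1/π) p.v. ∫_ℝ [x(x−1)/(ζ(ζ−1)(ζ−x))] V(ζ) dζ exists for every x ∈ ℝ \ {0,1} and equals (1/π) x log|x|. -/
open Filter MeasureTheory Real Set Topology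

/-! For `ζ > 0` the integrand is `x (x - 1) / ((ζ - 1) (ζ - x))`, with primitive
`F ζ = x (log |ζ - x| - log |ζ - 1|)` (this is `Real.log`, which is even), and `F → 0` at `+∞`.
The truncated integral over `(0, ∞)` is thus a sum of boundary terms: `-F 0` plus, for each
singularity `s ∈ {x, 1}` in `(0, ∞)`, the jump `F (s - ε) - F (s + ε)`. The singular part of
`F` at `s` is even about `s`, so each jump tends to `0`, leaving `-F 0 = -x log |x|`. -/

namespace HilbertShear

noncomputable def kernel (x ζ : ℝ) : ℝ := x * (x - 1) / ((ζ - 1) * (ζ - x))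

noncomputable def primitive (x t : ℝ) : ℝ := x * (log (t - x) - log (t - 1))

lemma integrand_eq_indicator (x : ℝ) :
    (fun ζ : ℝ => x * (x - 1) / (ζ * (ζ - 1) * (ζ - x)) * (if 0 < ζ then ζ else 0)) =
      (Ioi 0).indicator (kernel x) := by
  ext ζ
  by_cases hζ : 0 < ζ
  · rw [if_pos hζ, indicator_of_mem (mem_Ioi.2 hζ), kernel, mul_assoc ζ, div_mul_eq_mul_div,
      mul_comm _ ζ, mul_div_mul_left _ _ hζ.ne']
  · rw [if_neg hζ, indicator_of_notMem (mt mem_Ioi.1 hζ), mul_zero]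

lemma continuousAt_kernel {x ζ : ℝ} (hx : ζ ≠ x) (h1 : ζ ≠ 1) : ContinuousAt (kernel x) ζ :=
  continuousAt_const.div (by fun_prop) (mul_ne_zero (sub_ne_zero.2 h1) (sub_ne_zero.2 hx))

lemma hasDerivAt_primitive {x ζ : ℝ} (hx : ζ ≠ x) (h1 : ζ ≠ 1) :
    HasDerivAt (primitive x) (kernel x ζ) ζ := by
  have hζx : ζ - x ≠ 0 := sub_ne_zero.2 hx
  have hζ1 : ζ - 1 ≠ 0 := sub_ne_zero.2 h1
  refine ((((hasDerivAt_id ζ).sub_const x).log hζx).sub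
    (((hasDerivAt_id ζ).sub_const 1).log hζ1)).const_mul x |>.congr_deriv ?_
  simp only [kernel, id]
  field_simp
  ring

lemma tendsto_log_sub_sub_log_sub_atTop (a b : ℝ) :
    Tendsto (fun t => log (t - a) - log (t - b)) atTop (𝓝 0) := by
  have h := (tendsto_log_comp_add_sub_log (-a)).sub (tendsto_log_comp_add_sub_log (-b))
  simpa [sub_eq_add_neg] using h

lemma tendsto_primitive_atTop (x : ℝ) : Tendsto (primitive x) atTop (𝓝 0) := by
  have h := (tendsto_log_sub_sub_log_sub_atTop x 1).const_mul x
  rw [mul_zero] at h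
  exact h

lemma primitive_zero (x : ℝ) : primitive x 0 = x * log |x| := by
  simp [primitive, log_abs]

lemma tendsto_log_sub_sub_log_add (c : ℝ) :
    Tendsto (fun ε => log (c - ε) - log (c + ε)) (𝓝 0) (𝓝 0) := by
  rcases eq_or_ne c 0 with rfl | hc
  · simp [log_neg_eq_log]
  · have h : ContinuousAt (fun ε => log (c - ε) - log (c + ε)) 0 := by
      fun_prop (disch := simpa)
    simpa using h.tendsto

lemma tendsto_primitive_sub_primitive (x s : ℝ) :
    Tendsto (fun ε => primitive x (s - ε) - primitive x (s + ε)) (𝓝 0) (𝓝 0) := by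
  have h := ((tendsto_log_sub_sub_log_add (s - x)).sub
    (tendsto_log_sub_sub_log_add (s - 1))).const_mul x
  rw [sub_self, mul_zero] at h
  refine h.congr fun ε => ?_
  simp only [primitive]
  ring_nf

lemma continuousOn_kernel {x : ℝ} {s : Set ℝ} (hx : x ∉ s) (h1 : (1 : ℝ) ∉ s) :
    ContinuousOn (kernel x) s := fun _ hζ =>
  (continuousAt_kernel (ne_of_mem_of_not_mem hζ hx) (ne_of_mem_of_not_mem hζ h1)).continuousWithinAt

lemma integrableOn_kernel_Ioo {x a b : ℝ} (hx : x ∉ Icc a b) (h1 : (1 : ℝ) ∉ Icc a b) :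
    IntegrableOn (kernel x) (Ioo a b) :=
  (continuousOn_kernel hx h1).integrableOn_Icc.mono_set Ioo_subset_Icc_self

lemma integral_kernel_Ioo {x a b : ℝ} (hab : a ≤ b) (hx : x ∉ Icc a b) (h1 : (1 : ℝ) ∉ Icc a b) :
    ∫ ζ in Ioo a b, kernel x ζ = primitive x b - primitive x a := by
  rw [← integral_Ioc_eq_integral_Ioo, ← intervalIntegral.integral_of_le hab]
  rw [← uIcc_of_le hab] at hx h1
  exact intervalIntegral.integral_eq_sub_of_hasDerivAt
    (fun ζ hζ => hasDerivAt_primitive (ne_of_mem_of_not_mem hζ hx) (ne_of_mem_of_not_mem hζ h1))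
    (continuousOn_kernel hx h1).intervalIntegrable

lemma integrableOn_kernel_Ioi {x a : ℝ} (hx : x < a) (h1 : 1 < a) :
    IntegrableOn (kernel x) (Ioi a) := by
  have hderiv : ∀ ζ ∈ Ici a, HasDerivAt (primitive x) (kernel x ζ) ζ := fun ζ hζ =>
    hasDerivAt_primitive (hx.trans_le hζ).ne' (h1.trans_le hζ).ne'
  have hden : ∀ ζ ∈ Ioi a, 0 ≤ (ζ - 1) * (ζ - x) := fun ζ hζ =>
    mul_nonneg (by linarith [hζ.out]) (by linarith [hζ.out])
  rcases le_total 0 (x * (x - 1)) with h | h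
  · exact integrableOn_Ioi_deriv_of_nonneg' hderiv (fun ζ hζ => div_nonneg h (hden ζ hζ))
      (tendsto_primitive_atTop x)
  · exact integrableOn_Ioi_deriv_of_nonpos' hderiv
      (fun ζ hζ => div_nonpos_of_nonpos_of_nonneg h (hden ζ hζ)) (tendsto_primitive_atTop x)

lemma integral_kernel_Ioi {x a : ℝ} (hx : x < a) (h1 : 1 < a) :
    ∫ ζ in Ioi a, kernel x ζ = -primitive x a := by
  rw [integral_Ioi_of_hasDerivAt_of_tendsto' (fun ζ hζ => hasDerivAt_primitive
    (hx.trans_le hζ).ne' (h1.trans_le hζ).ne') (integrableOn_kernel_Ioi hx h1)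
    (tendsto_primitive_atTop x), zero_sub]

lemma setOf_lt_abs_sub_and_lt_abs_sub_inter_Ioi_zero {m M ε : ℝ} (hmM : m ≤ M)
    (hm : 0 ≤ m + ε) :
    {ζ : ℝ | ε < |ζ - m| ∧ ε < |ζ - M|} ∩ Ioi 0 =
      Ioo 0 (m - ε) ∪ (Ioo (m + ε) (M - ε) ∪ Ioi (M + ε)) := by
  ext ζ
  simp only [mem_inter_iff, mem_ofPred_eq, mem_union, mem_Ioo, mem_Ioi, lt_abs]
  constructor
  · rintro ⟨⟨hζm | hζm, hζM | hζM⟩, h0⟩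
    · exact .inr (.inr (by linarith))
    · exact .inr (.inl ⟨by linarith, by linarith⟩)
    all_goals exact .inl ⟨h0, by linarith⟩
  · rintro (⟨_, _⟩ | ⟨_, _⟩ | _) <;> refine ⟨⟨?_, ?_⟩, ?_⟩ <;>
      first | linarith | (left; linarith) | (right; linarith)

lemma setOf_lt_abs_sub_and_lt_abs_sub_inter_Ioi_zero_of_add_nonpos {p s ε : ℝ} (hp : p + ε ≤ 0)
    (hs : 0 ≤ s + ε) :
    {ζ : ℝ | ε < |ζ - p| ∧ ε < |ζ - s|} ∩ Ioi 0 = Ioo 0 (s - ε) ∪ Ioi (s + ε) := by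
  ext ζ
  simp only [mem_inter_iff, mem_ofPred_eq, mem_union, mem_Ioo, mem_Ioi, lt_abs]
  constructor
  · rintro ⟨⟨-, hζs | hζs⟩, h0⟩
    · exact .inr (by linarith)
    · exact .inl ⟨h0, by linarith⟩
  · rintro (⟨_, _⟩ | _) <;> refine ⟨⟨?_, ?_⟩, ?_⟩ <;>
      first | linarith | (left; linarith) | (right; linarith)

lemma setIntegral_kernel_of_pos {x m M ε : ℝ} (hε : 0 < ε) (hm : ε < m)
    (hmM : 2 * ε < M - m) (hx : x = m ∨ x = M) (h1 : (1 : ℝ) = m ∨ 1 = M) :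
    ∫ ζ in {ζ : ℝ | ε < |ζ - m| ∧ ε < |ζ - M|} ∩ Ioi 0, kernel x ζ =
      (primitive x (m - ε) - primitive x (m + ε)) + (primitive x (M - ε) - primitive x (M + ε))
        - primitive x 0 := by
  have avoid : ∀ p : ℝ, p = m ∨ p = M →
      p ∉ Icc 0 (m - ε) ∧ p ∉ Icc (m + ε) (M - ε) ∧ p < M + ε := by
    rintro p (rfl | rfl) <;> simp only [mem_Icc, not_and, not_le] <;>
      exact ⟨fun _ => by linarith, fun _ => by linarith, by linarith⟩
  obtain ⟨hxA, hxB, hxC⟩ := avoid x hx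
  obtain ⟨h1A, h1B, h1C⟩ := avoid 1 h1
  have hAB : Disjoint (Ioo 0 (m - ε)) (Ioo (m + ε) (M - ε)) :=
    disjoint_left.2 fun _ h h' => by linarith [h.2, h'.1]
  have hAC : Disjoint (Ioo 0 (m - ε)) (Ioi (M + ε)) :=
    disjoint_left.2 fun _ h h' => by linarith [h.2, mem_Ioi.1 h']
  have hBC : Disjoint (Ioo (m + ε) (M - ε)) (Ioi (M + ε)) :=
    disjoint_left.2 fun _ h h' => by linarith [h.2, mem_Ioi.1 h']
  have hiB := integrableOn_kernel_Ioo hxB h1B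
  have hiC := integrableOn_kernel_Ioi hxC h1C
  rw [setOf_lt_abs_sub_and_lt_abs_sub_inter_Ioi_zero (by linarith) (by linarith),
    setIntegral_union (disjoint_union_right.2 ⟨hAB, hAC⟩)
      (measurableSet_Ioo.union measurableSet_Ioi) (integrableOn_kernel_Ioo hxA h1A) (hiB.union hiC),
    setIntegral_union hBC measurableSet_Ioi hiB hiC, integral_kernel_Ioo (by linarith) hxA h1A,
    integral_kernel_Ioo (by linarith) hxB h1B, integral_kernel_Ioi hxC h1C]
  ring

lemma setIntegral_kernel_of_neg {x ε : ℝ} (hε : 0 < ε) (hx : x + ε ≤ 0) (h1 : ε < 1) :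
    ∫ ζ in {ζ : ℝ | ε < |ζ - x| ∧ ε < |ζ - 1|} ∩ Ioi 0, kernel x ζ =
      (primitive x (1 - ε) - primitive x (1 + ε)) - primitive x 0 := by
  have hxA : x ∉ Icc 0 (1 - ε) := fun h => by linarith [h.1]
  have h1A : (1 : ℝ) ∉ Icc 0 (1 - ε) := fun h => by linarith [h.2]
  have hxC : x < 1 + ε := by linarith
  have h1C : (1 : ℝ) < 1 + ε := by linarith
  rw [setOf_lt_abs_sub_and_lt_abs_sub_inter_Ioi_zero_of_add_nonpos hx (by linarith),
    setIntegral_union (disjoint_left.2 fun _ h h' => by linarith [h.2, mem_Ioi.1 h'])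
      measurableSet_Ioi (integrableOn_kernel_Ioo hxA h1A) (integrableOn_kernel_Ioi hxC h1C),
    integral_kernel_Ioo (by linarith) hxA h1A, integral_kernel_Ioi hxC h1C]
  ring

lemma tendsto_setIntegral_kernel_of_pos {x m M : ℝ} (hm : 0 < m) (hmM : m < M)
    (hx : x = m ∨ x = M) (h1 : (1 : ℝ) = m ∨ 1 = M) :
    Tendsto (fun ε => ∫ ζ in {ζ : ℝ | ε < |ζ - m| ∧ ε < |ζ - M|} ∩ Ioi 0, kernel x ζ)
      (𝓝[>] 0) (𝓝 (-primitive x 0)) := by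
  have h := (((tendsto_primitive_sub_primitive x m).add
    (tendsto_primitive_sub_primitive x M)).mono_left
    (nhdsWithin_le_nhds (s := Ioi 0))).sub_const (primitive x 0)
  rw [add_zero, zero_sub] at h
  refine h.congr' ?_
  filter_upwards [Ioo_mem_nhdsGT (lt_min hm (half_pos (sub_pos.2 hmM)))] with ε ⟨hε, hεδ⟩
  rw [lt_min_iff] at hεδ
  exact (setIntegral_kernel_of_pos hε hεδ.1 (by linarith) hx h1).symm

lemma tendsto_setIntegral_kernel_of_neg {x : ℝ} (hx : x < 0) :
    Tendsto (fun ε => ∫ ζ in {ζ : ℝ | ε < |ζ - x| ∧ ε < |ζ - 1|} ∩ Ioi 0, kernel x ζ)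
      (𝓝[>] 0) (𝓝 (-primitive x 0)) := by
  have h := ((tendsto_primitive_sub_primitive x 1).mono_left
    (nhdsWithin_le_nhds (s := Ioi 0))).sub_const (primitive x 0)
  rw [zero_sub] at h
  refine h.congr' ?_
  filter_upwards [Ioo_mem_nhdsGT (lt_min (neg_pos.2 hx) one_pos)] with ε ⟨hε, hεδ⟩
  rw [lt_min_iff] at hεδ
  exact (setIntegral_kernel_of_neg hε (by linarith) hεδ.2).symm

lemma tendsto_setIntegral_kernel {x : ℝ} (hx0 : x ≠ 0) (hx1 : x ≠ 1) :
    Tendsto (fun ε => ∫ ζ in {ζ : ℝ | ε < |ζ - x| ∧ ε < |ζ - 1|} ∩ Ioi 0, kernel x ζ)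
      (𝓝[>] 0) (𝓝 (-primitive x 0)) := by
  rcases hx0.lt_or_gt with hx | hx
  · exact tendsto_setIntegral_kernel_of_neg hx
  rcases hx1.lt_or_gt with hx1 | hx1
  · exact tendsto_setIntegral_kernel_of_pos hx hx1 (.inl rfl) (.inr rfl)
  · simpa only [and_comm] using
      tendsto_setIntegral_kernel_of_pos one_pos hx1 (.inr rfl) (.inl rfl)

end HilbertShear

open HilbertShear in
/-- The Hilbert transform of the elementary shear vector field for the geodesic `(0,∞)`:
for every `x ∉ {0,1}` the principal value integral
`−(1/π) p.v. ∫ x(x−1)/(ζ(ζ−1)(ζ−x)) V(ζ) dζ` exists and equals `(1/π) x log|x|`,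
where `V(ζ) = ζ` for `ζ > 0` and `V(ζ) = 0` otherwise, and the principal value is
taken by removing symmetric `ε`-neighborhoods of the singularities `x` and `1`. -/
theorem hilbert_transform_elementary_shear_zero_infty
    (x : ℝ) (hx0 : x ≠ 0) (hx1 : x ≠ 1) :
    Tendsto
      (fun ε : ℝ =>
        -(1 / π) *
          ∫ ζ in {ζ : ℝ | ε < |ζ - x| ∧ ε < |ζ - 1|},
            x * (x - 1) / (ζ * (ζ - 1) * (ζ - x)) * (if 0 < ζ then ζ else 0))
      (nhdsWithin 0 (Set.Ioi (0 : ℝ)))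
      (nhds ((1 / π) * x * Real.log |x|)) := by
  have h := (tendsto_setIntegral_kernel hx0 hx1).const_mul (-(1 / π))
  rw [primitive_zero, neg_mul_neg, ← mul_assoc] at h
  simpa only [integrand_eq_indicator, setIntegral_indicator measurableSet_Ioi] using h
end

section
/- Let V : ℝ → ℝ be defined by V(x) = 0 on [0,1], V(x) = ṡ(1)(x−1)+...+ṡ(n)(x−n) for x ∈ (n, n+1], and V(x) = −ṡ(0)x−...−ṡ(−n)(x+n) for x ∈ [−n−1, −n), where ṡ : ℤ → ℝ satisfies |ṡ(m) + ((k−1)/k)[ṡ(m+1)+ṡ(m−1)] + ((k−2)/k)[ṡ(m+2)+ṡ(m−2)] + ... + (1/k)[ṡ(m+k)+ṡ(m−k)]| ≤ C for all m ∈ ℤ and k ≥ 1 (in particular ‖ṡ‖_∞ ≤ C). Then V satisfies the Zygmund condition |V(x+t) + V(x−t) − 2V(x)| ≤ (2C + 18C)·t for all x ∈ ℝ and t > 0. -/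
/-!
Write `V` as `∑ s n * fanRamp n`, where `fanRamp n x` is `(x - n)⁺` for `n > 0` and
`(n - x)⁺` for `n ≤ 0`. Each ramp has second difference `max (t - |x - n|) 0`, a tent of
height `t` at `n`, so `V (x + t) + V (x - t) - 2 V x = ∑ s n * tent t (x - n)`.
For `t ≤ 1` at most two tents meet `x`, which gives `2 C t`. For `t ≥ 1`, replacing `t` by
`k = ⌈t⌉` and `x` by the nearest integer `m` moves each tent by at most `3 / 2` on the
`2 k + 1` integers of `[m - k, m + k]`, and the moved sum is exactly `k` times the fan
expression at `m` of radius `k`, hence at most `C k`.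
-/

def tent (t y : ℝ) : ℝ := max (t - |y|) 0

lemma tent_nonneg (t y : ℝ) : 0 ≤ tent t y := le_max_right _ _

lemma tent_le {t : ℝ} (ht : 0 ≤ t) (y : ℝ) : tent t y ≤ t :=
  max_le (by linarith [abs_nonneg y]) ht

lemma tent_eq_zero_of_le_abs {t y : ℝ} (h : t ≤ |y|) : tent t y = 0 :=
  max_eq_right (by linarith)

lemma abs_tent_sub_tent_le (t t' y y' : ℝ) :
    |tent t y - tent t' y'| ≤ |t - t'| + |y - y'| :=
  calc |tent t y - tent t' y'| ≤ |(t - |y|) - (t' - |y'|)| := abs_max_sub_max_le_abs _ _ _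
    _ = |(t - t') - (|y| - |y'|)| := by ring_nf
    _ ≤ |t - t'| + |(|y| - |y'|)| := abs_sub _ _
    _ ≤ |t - t'| + |y - y'| := by linarith [abs_abs_sub_abs_le_abs_sub y y']

lemma max_add_add_max_sub_sub_two_mul_max {t : ℝ} (ht : 0 ≤ t) (a : ℝ) :
    max (a + t) 0 + max (a - t) 0 - 2 * max a 0 = tent t a := by
  unfold tent
  rcases abs_cases a with ⟨h, _⟩ | ⟨h, _⟩ <;> rw [h] <;> simp only [max_def] <;>
    split_ifs <;> linarith

def fanRamp (n : ℤ) (x : ℝ) : ℝ := if 0 < n then max (x - n) 0 else max (n - x) 0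

lemma fanRamp_add_fanRamp_sub_two_mul (n : ℤ) (x : ℝ) {t : ℝ} (ht : 0 ≤ t) :
    fanRamp n (x + t) + fanRamp n (x - t) - 2 * fanRamp n x = tent t (x - n) := by
  unfold fanRamp
  split_ifs
  · rw [← max_add_add_max_sub_sub_two_mul_max ht]; ring_nf
  · rw [tent, abs_sub_comm, ← tent, ← max_add_add_max_sub_sub_two_mul_max ht]; ring_nf

lemma sum_Icc_natCast {M : Type*} [AddCommMonoid M] (g : ℤ → M) (a b : ℕ) :
    ∑ i ∈ Finset.Icc a b, g i = ∑ n ∈ Finset.Icc (a : ℤ) b, g n :=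
  Finset.sum_nbij' (fun i => (i : ℤ)) Int.toNat (by simp) (by simp; omega) (by simp)
    (by simp; omega) (by simp)

lemma sum_range_succ_neg_natCast {M : Type*} [AddCommMonoid M] (g : ℤ → M) (b : ℕ) :
    ∑ i ∈ Finset.range (b + 1), g (-i) = ∑ n ∈ Finset.Icc (-(b : ℤ)) 0, g n :=
  Finset.sum_nbij' (fun i => -(i : ℤ)) (fun n => (-n).toNat) (by simp) (by simp; omega)
    (by simp) (by simp; omega) (by simp)

lemma sum_mul_fanRamp_of_mem_Icc (s : ℤ → ℝ) {N m : ℕ} (hm : m ≤ N) {x : ℝ}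
    (hx : x ∈ Set.Icc (m : ℝ) (m + 1)) :
    ∑ n ∈ Finset.Icc (-(N : ℤ)) N, s n * fanRamp n x =
      ∑ i ∈ Finset.Icc 1 m, s i * (x - i) := by
  have hsub : Finset.Icc (1 : ℤ) m ⊆ Finset.Icc (-(N : ℤ)) N :=
    Finset.Icc_subset_Icc (by omega) (by exact_mod_cast hm)
  have hcast := sum_Icc_natCast (fun n => s n * (x - n)) 1 m
  simp only [Int.cast_natCast, Nat.cast_one] at hcast
  rw [hcast, ← Finset.sum_subset hsub]
  · refine Finset.sum_congr rfl fun n hn => ?_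
    obtain ⟨h1, h2⟩ := Finset.mem_Icc.1 hn
    have : (n : ℝ) ≤ m := by exact_mod_cast h2
    rw [fanRamp, if_pos (by omega), max_eq_left (by linarith [hx.1])]
  · intro n _ hn
    simp only [Finset.mem_Icc, not_and_or, not_le] at hn
    unfold fanRamp
    split_ifs with hpos
    · have : (m : ℝ) + 1 ≤ n := by exact_mod_cast (by omega : (m : ℤ) + 1 ≤ n)
      rw [max_eq_right (by linarith [hx.2]), mul_zero]
    · have : (n : ℝ) ≤ 0 := by exact_mod_cast (not_lt.1 hpos)
      rw [max_eq_right (by linarith [hx.1, (Nat.cast_nonneg m : (0 : ℝ) ≤ m)]), mul_zero]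

lemma sum_mul_fanRamp_of_mem_Ico (s : ℤ → ℝ) {N m : ℕ} (hm : m ≤ N) {x : ℝ}
    (hx : x ∈ Set.Ico (-(m : ℝ) - 1) (-m)) :
    ∑ n ∈ Finset.Icc (-(N : ℤ)) N, s n * fanRamp n x =
      -∑ i ∈ Finset.range (m + 1), s (-(i : ℤ)) * (x + i) := by
  have hsub : Finset.Icc (-(m : ℤ)) 0 ⊆ Finset.Icc (-(N : ℤ)) N :=
    Finset.Icc_subset_Icc (by omega) (by omega)
  have hcast := sum_range_succ_neg_natCast (fun n => -(s n * (x - n))) m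
  simp only [Int.cast_neg, Int.cast_natCast, sub_neg_eq_add] at hcast
  rw [← Finset.sum_neg_distrib, hcast, ← Finset.sum_subset hsub]
  · refine Finset.sum_congr rfl fun n hn => ?_
    obtain ⟨h1, h2⟩ := Finset.mem_Icc.1 hn
    have : -(m : ℝ) ≤ n := by exact_mod_cast h1
    rw [fanRamp, if_neg (by omega), max_eq_left (by linarith [hx.2])]
    ring
  · intro n _ hn
    simp only [Finset.mem_Icc, not_and_or, not_le] at hn
    unfold fanRamp
    split_ifs with hpos
    · have : (1 : ℝ) ≤ n := by exact_mod_cast hpos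
      rw [max_eq_right (by linarith [hx.2, (Nat.cast_nonneg m : (0 : ℝ) ≤ m)]), mul_zero]
    · have : (n : ℝ) ≤ -(m : ℝ) - 1 := by exact_mod_cast (by omega : n ≤ -(m : ℤ) - 1)
      rw [max_eq_right (by linarith [hx.1]), mul_zero]

lemma exists_nat_mem_Ioc {x : ℝ} (hx : 0 < x) : ∃ m : ℕ, x ∈ Set.Ioc (m : ℝ) (m + 1) := by
  refine ⟨⌈x⌉₊ - 1, ?_⟩
  have h := (Nat.ceil_eq_iff (Nat.ceil_pos.2 hx).ne').1 rfl
  rw [Nat.cast_sub (Nat.ceil_pos.2 hx), Nat.cast_one] at h ⊢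
  exact ⟨h.1, by linarith [h.2]⟩

lemma eq_sum_mul_fanRamp {s : ℤ → ℝ} {V : ℝ → ℝ}
    (hV01 : ∀ x ∈ Set.Icc (0 : ℝ) 1, V x = 0)
    (hVpos : ∀ n : ℕ, ∀ x ∈ Set.Ioc (n : ℝ) ((n : ℝ) + 1),
      V x = ∑ i ∈ Finset.Icc 1 n, s (i : ℤ) * (x - i))
    (hVneg : ∀ n : ℕ, ∀ x ∈ Set.Ico (-(n : ℝ) - 1) (-(n : ℝ)),
      V x = -∑ i ∈ Finset.range (n + 1), s (-(i : ℤ)) * (x + i))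
    {N : ℕ} {x : ℝ} (hx : |x| ≤ N) :
    V x = ∑ n ∈ Finset.Icc (-(N : ℤ)) N, s n * fanRamp n x := by
  rcases lt_trichotomy x 0 with hneg | rfl | hpos
  · obtain ⟨m, hm⟩ := exists_nat_mem_Ioc (neg_pos.2 hneg)
    have hmN : m ≤ N := by exact_mod_cast (hm.1.trans_le ((neg_le_abs x).trans hx)).le
    rw [hVneg m x ⟨by linarith [hm.2], by linarith [hm.1]⟩,
      sum_mul_fanRamp_of_mem_Ico s hmN ⟨by linarith [hm.2], by linarith [hm.1]⟩]
  · rw [hV01 0 ⟨le_rfl, zero_le_one⟩, sum_mul_fanRamp_of_mem_Icc s (Nat.zero_le N)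
      (by norm_num), Finset.Icc_eq_empty_of_lt zero_lt_one, Finset.sum_empty]
  · obtain ⟨m, hm⟩ := exists_nat_mem_Ioc hpos
    have hmN : m ≤ N := by exact_mod_cast (hm.1.trans_le ((le_abs_self x).trans hx)).le
    rw [hVpos m x hm, sum_mul_fanRamp_of_mem_Icc s hmN (Set.Ioc_subset_Icc_self hm)]

lemma support_mul_tent_subset (s : ℤ → ℝ) (x t : ℝ) {S : Finset ℤ}
    (hS : ∀ n : ℤ, |x - n| < t → n ∈ S) :
    Function.support (fun n : ℤ => s n * tent t (x - n)) ⊆ S := by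
  refine Function.support_subset_iff'.2 fun n hn => ?_
  rw [tent_eq_zero_of_le_abs (not_lt.1 fun h => hn (hS n h)), mul_zero]

lemma add_add_sub_two_mul_eq_finsum_mul_tent {s : ℤ → ℝ} {V : ℝ → ℝ}
    (hV01 : ∀ x ∈ Set.Icc (0 : ℝ) 1, V x = 0)
    (hVpos : ∀ n : ℕ, ∀ x ∈ Set.Ioc (n : ℝ) ((n : ℝ) + 1),
      V x = ∑ i ∈ Finset.Icc 1 n, s (i : ℤ) * (x - i))
    (hVneg : ∀ n : ℕ, ∀ x ∈ Set.Ico (-(n : ℝ) - 1) (-(n : ℝ)),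
      V x = -∑ i ∈ Finset.range (n + 1), s (-(i : ℤ)) * (x + i))
    (x : ℝ) {t : ℝ} (ht : 0 ≤ t) :
    V (x + t) + V (x - t) - 2 * V x = ∑ᶠ n : ℤ, s n * tent t (x - n) := by
  obtain ⟨N, hN⟩ := exists_nat_ge (|x| + t)
  have hsupp := support_mul_tent_subset s x t (S := Finset.Icc (-(N : ℤ)) N) fun n hn => by
    have : |(n : ℝ)| ≤ N := by linarith [abs_sub_abs_le_abs_sub (n : ℝ) x, abs_sub_comm x n]
    rw [abs_le] at this
    exact Finset.mem_Icc.2 ⟨by exact_mod_cast this.1, by exact_mod_cast this.2⟩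
  have hxt : |x + t| ≤ N := by linarith [abs_add_le x t, abs_of_nonneg ht]
  have hx_t : |x - t| ≤ N := by linarith [abs_sub x t, abs_of_nonneg ht]
  rw [finsum_eq_sum_of_support_subset _ hsupp, eq_sum_mul_fanRamp hV01 hVpos hVneg hxt,
    eq_sum_mul_fanRamp hV01 hVpos hVneg hx_t,
    eq_sum_mul_fanRamp hV01 hVpos hVneg (x := x) (by linarith),
    Finset.mul_sum, ← Finset.sum_add_distrib, ← Finset.sum_sub_distrib]
  refine Finset.sum_congr rfl fun n _ => ?_
  rw [← fanRamp_add_fanRamp_sub_two_mul n x ht]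
  ring

lemma sum_Icc_sub_add_eq {M : Type*} [AddCommMonoid M] (g : ℤ → M) (m : ℤ) (k : ℕ) :
    ∑ n ∈ Finset.Icc (m - k) (m + k), g n =
      g m + ∑ i ∈ Finset.Icc 1 k, (g (m + i) + g (m - i)) := by
  induction k with
  | zero => simp
  | succ k ih =>
    have hIcc : Finset.Icc (m - (k + 1 : ℕ)) (m + (k + 1 : ℕ)) =
        insert (m + (k + 1 : ℕ)) (insert (m - (k + 1 : ℕ)) (Finset.Icc (m - k) (m + k))) := by
      ext n; simp only [Finset.mem_Icc, Finset.mem_insert]; omega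
    rw [hIcc, Finset.sum_insert (by simp; omega), Finset.sum_insert (by simp; omega), ih,
      Finset.sum_Icc_succ_top (by omega)]
    abel

lemma sum_Icc_mul_tent_eq_mul (s : ℤ → ℝ) (m : ℤ) {k : ℕ} (hk : k ≠ 0) :
    ∑ n ∈ Finset.Icc (m - k) (m + k), s n * tent k (m - n) =
      k * (s m + ∑ i ∈ Finset.Icc 1 k, ((k : ℝ) - i) / k * (s (m + i) + s (m - i))) := by
  have hk' : (k : ℝ) ≠ 0 := Nat.cast_ne_zero.2 hk
  rw [sum_Icc_sub_add_eq, mul_add, Finset.mul_sum]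
  congr 1
  · simp [tent, mul_comm]
  refine Finset.sum_congr rfl fun i hi => ?_
  have hik : (i : ℝ) ≤ k := by exact_mod_cast (Finset.mem_Icc.1 hi).2
  have htent : ∀ y : ℝ, |y| = i → tent k y = k - i := fun y hy => by
    rw [tent, hy, max_eq_left (by linarith)]
  push_cast
  rw [htent _ (by simp), htent _ (by simp)]
  field_simp

lemma abs_sum_mul_le_card_mul {ι : Type*} (S : Finset ι) {a b : ι → ℝ} {A B : ℝ}
    (ha : ∀ i ∈ S, |a i| ≤ A) (hb : ∀ i ∈ S, |b i| ≤ B) :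
    |∑ i ∈ S, a i * b i| ≤ S.card * (A * B) := by
  refine (Finset.abs_sum_le_sum_abs _ _).trans ?_
  rw [← nsmul_eq_mul]
  refine Finset.sum_le_card_nsmul _ _ _ fun i hi => ?_
  rw [abs_mul]
  exact mul_le_mul (ha i hi) (hb i hi) (abs_nonneg _) ((abs_nonneg _).trans (ha i hi))

lemma mem_floor_pair_of_abs_sub_lt_one {x : ℝ} {n : ℤ} (h : |x - n| < 1) :
    n ∈ ({⌊x⌋, ⌊x⌋ + 1} : Finset ℤ) := by
  rw [abs_lt] at h
  have h₁ : ⌊x⌋ < n + 1 := Int.floor_lt.2 (by push_cast; linarith)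
  have h₂ : n < ⌊x⌋ + 2 := by
    have := Int.lt_floor_add_one x
    exact_mod_cast (by linarith : (n : ℝ) < ⌊x⌋ + 2)
  simp only [Finset.mem_insert, Finset.mem_singleton]
  omega

lemma mem_Icc_of_abs_sub_lt {m n : ℤ} {r : ℕ} (h : |(m : ℝ) - n| < r + 1) :
    n ∈ Finset.Icc (m - r) (m + r) := by
  have h' : |m - n| < r + 1 := by exact_mod_cast h
  rw [abs_lt] at h'
  exact Finset.mem_Icc.2 ⟨by omega, by omega⟩

lemma abs_finsum_mul_tent_le_of_le_one {s : ℤ → ℝ} {C : ℝ} (hsup : ∀ m : ℤ, |s m| ≤ C)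
    (x : ℝ) {t : ℝ} (ht₀ : 0 ≤ t) (ht₁ : t ≤ 1) :
    |∑ᶠ n : ℤ, s n * tent t (x - n)| ≤ 2 * C * t := by
  have hsupp := support_mul_tent_subset s x t fun n hn =>
    mem_floor_pair_of_abs_sub_lt_one (hn.trans_le ht₁)
  rw [finsum_eq_sum_of_support_subset _ hsupp]
  refine (abs_sum_mul_le_card_mul _ (fun n _ => hsup n) (B := t) fun n _ => ?_).trans ?_
  · rw [abs_of_nonneg (tent_nonneg _ _)]
    exact tent_le ht₀ _
  · have hC : 0 ≤ C := (abs_nonneg _).trans (hsup 0)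
    have hcard : (({⌊x⌋, ⌊x⌋ + 1} : Finset ℤ).card : ℝ) ≤ 2 := by
      exact_mod_cast Finset.card_le_two
    nlinarith [mul_nonneg hC ht₀]

lemma abs_finsum_mul_tent_le_of_one_le {s : ℤ → ℝ} {C : ℝ}
    (hfan : ∀ m : ℤ, ∀ k : ℕ, 1 ≤ k →
      |s m + ∑ i ∈ Finset.Icc 1 k, ((k : ℝ) - i) / k * (s (m + i) + s (m - i))| ≤ C)
    (hsup : ∀ m : ℤ, |s m| ≤ C) (x : ℝ) {t : ℝ} (ht : 1 ≤ t) :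
    |∑ᶠ n : ℤ, s n * tent t (x - n)| ≤ 18 * C * t := by
  set k := ⌈t⌉₊
  set m := round x
  have hk : 1 ≤ k := Nat.one_le_ceil_iff.2 (by linarith)
  have htk : t ≤ k := Nat.le_ceil t
  have hkt : (k : ℝ) < t + 1 := Nat.ceil_lt_add_one (by linarith)
  have hxm : |x - m| ≤ 1 / 2 := abs_sub_round x
  have hC : 0 ≤ C := (abs_nonneg _).trans (hsup 0)
  have hsupp := support_mul_tent_subset s x t fun n hn => mem_Icc_of_abs_sub_lt (r := k) <| by
    linarith [abs_sub_le (m : ℝ) x n, abs_sub_comm x m]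
  have hdiff : ∀ n : ℤ, |tent t (x - n) - tent k (m - n)| ≤ 3 / 2 := fun n => by
    have := abs_tent_sub_tent_le t k (x - n) (m - n)
    rw [abs_sub_comm t, abs_of_nonneg (sub_nonneg.2 htk), sub_sub_sub_cancel_right] at this
    linarith
  have hcard : ((Finset.Icc (m - k) (m + k)).card : ℝ) = 2 * k + 1 := by
    rw [Int.card_Icc, show m + k + 1 - (m - k) = ((2 * k + 1 : ℕ) : ℤ) by push_cast; ring,
      Int.toNat_natCast]
    push_cast; ring
  have herr := abs_sum_mul_le_card_mul (Finset.Icc (m - k) (m + k)) (fun n _ => hsup n)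
    (fun n _ => hdiff n)
  have hmain := sum_Icc_mul_tent_eq_mul s m (k := k) (by omega)
  have hfan' := hfan m k hk
  rw [finsum_eq_sum_of_support_subset _ hsupp]
  calc |∑ n ∈ Finset.Icc (m - k) (m + k), s n * tent t (x - n)|
      = |∑ n ∈ Finset.Icc (m - k) (m + k), s n * (tent t (x - n) - tent k (m - n)) +
          k * (s m + ∑ i ∈ Finset.Icc 1 k, ((k : ℝ) - i) / k * (s (m + i) + s (m - i)))| := by
        rw [← hmain, ← Finset.sum_add_distrib]
        simp only [mul_sub, sub_add_cancel]
    _ ≤ (2 * k + 1) * (C * (3 / 2)) + k * C := by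
        refine (abs_add_le _ _).trans (add_le_add (hcard ▸ herr) ?_)
        rw [abs_mul, Nat.abs_cast]
        exact mul_le_mul_of_nonneg_left hfan' (Nat.cast_nonneg k)
    _ ≤ 18 * C * t := by nlinarith

theorem piecewise_linear_fan_vector_field_zygmund_general
    (C : ℝ) (s : ℤ → ℝ) (V : ℝ → ℝ)
    (hfan : ∀ m : ℤ, ∀ k : ℕ, 1 ≤ k →
      |s m + ∑ i ∈ Finset.Icc 1 k, ((k : ℝ) - i) / k * (s (m + i) + s (m - i))| ≤ C)
    (hsup : ∀ m : ℤ, |s m| ≤ C)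
    (hV01 : ∀ x ∈ Set.Icc (0 : ℝ) 1, V x = 0)
    (hVpos : ∀ n : ℕ, ∀ x ∈ Set.Ioc (n : ℝ) ((n : ℝ) + 1),
      V x = ∑ i ∈ Finset.Icc 1 n, s (i : ℤ) * (x - i))
    (hVneg : ∀ n : ℕ, ∀ x ∈ Set.Ico (-(n : ℝ) - 1) (-(n : ℝ)),
      V x = -∑ i ∈ Finset.range (n + 1), s (-(i : ℤ)) * (x + i)) :
    ∀ x : ℝ, ∀ t : ℝ, 0 < t → |V (x + t) + V (x - t) - 2 * V x| ≤ (2 * C + 18 * C) * t := by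
  intro x t ht
  rw [add_add_sub_two_mul_eq_finsum_mul_tent hV01 hVpos hVneg x ht.le]
  have hCt : 0 ≤ C * t := mul_nonneg ((abs_nonneg _).trans (hsup 0)) ht.le
  rcases le_total t 1 with ht₁ | ht₁
  · linarith [abs_finsum_mul_tent_le_of_le_one hsup x ht.le ht₁]
  · linarith [abs_finsum_mul_tent_le_of_one_le hfan hsup x ht₁]

/-- Proposition 4.2: the piecewise linear vector field associated to an infinitesimal
shear function `ṡ : ℤ → ℝ` on the fan at infinity satisfying the fan condition (10)
with constant `C` (and `‖ṡ‖_∞ ≤ C`) is Zygmund with constant `2C + 18C`. -/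
theorem piecewise_linear_fan_vector_field_zygmund
    (C : ℝ) (hC : 0 < C) (s : ℤ → ℝ) (V : ℝ → ℝ)
    (hfan : ∀ m : ℤ, ∀ k : ℕ, 1 ≤ k →
      |s m + ∑ i ∈ Finset.Icc 1 k, ((k : ℝ) - i) / k * (s (m + i) + s (m - i))| ≤ C)
    (hsup : ∀ m : ℤ, |s m| ≤ C)
    (hV01 : ∀ x ∈ Set.Icc (0 : ℝ) 1, V x = 0)
    (hVpos : ∀ n : ℕ, ∀ x ∈ Set.Ioc (n : ℝ) ((n : ℝ) + 1),
      V x = ∑ i ∈ Finset.Icc 1 n, s (i : ℤ) * (x - i))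
    (hVneg : ∀ n : ℕ, ∀ x ∈ Set.Ico (-(n : ℝ) - 1) (-(n : ℝ)),
      V x = -∑ i ∈ Finset.range (n + 1), s (-(i : ℤ)) * (x + i)) :
    ∀ x : ℝ, ∀ t : ℝ, 0 < t → |V (x + t) + V (x - t) - 2 * V x| ≤ (2 * C + 18 * C) * t :=
  piecewise_linear_fan_vector_field_zygmund_general C s V hfan hsup hV01 hVpos hVneg
end

section
/- Let ṡ : ℤ → ℝ satisfy the fan condition: there is C > 0 with |ṡ(m) + Σ_{i=1}^{k} ((k−i)/k)·[ṡ(m+i)+ṡ(m−i)]| ≤ C for all m ∈ ℤ and k ≥ 1. Define V : ℝ → ℝ as the continuous piecewise-linear function with V = 0 on [0,1] and slope jump ṡ(n) at the integer n (i.e., V'(x) = Σ_{1 ≤ i ≤ n} ṡ(i) on (n, n+1) for n ≥ 1 and V'(x) = −Σ_{0 ≤ i ≤ n} ṡ(−i) on (−n−1, −n) for n ≥ 0). Then for all integers m and k ≥ 0, |V(m+k) + V(m−k) − 2V(m)| ≤ C·k. -/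
open Finset Set

/-- The fan condition (10) for infinitesimal shears on the fan with tip `∞` implies the
second-difference bound `|V(m+k) + V(m−k) − 2V(m)| ≤ C·k` at integer points for the
associated continuous piecewise-linear vector field `V` with `V = 0` on `[0,1]` and slope
`∑_{1 ≤ i ≤ n} ṡ(i)` on `(n, n+1)` for `n ≥ 1`, slope `−∑_{0 ≤ i ≤ n} ṡ(−i)` on
`(−n−1, −n)` for `n ≥ 0`. -/
theorem fan_condition_second_difference_bound
    (C : ℝ) (hC : 0 < C) (s : ℤ → ℝ) (V : ℝ → ℝ)
    (hfan : ∀ m : ℤ, ∀ k : ℕ, 1 ≤ k →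
      |s m + ∑ i ∈ Finset.Icc 1 k, ((k : ℝ) - i) / k * (s (m + i) + s (m - i))| ≤ C)
    (hcont : Continuous V)
    (hV01 : ∀ x ∈ Set.Icc (0 : ℝ) 1, V x = 0)
    (hslopePos : ∀ n : ℕ, 1 ≤ n → ∀ x ∈ Set.Ioo (n : ℝ) ((n : ℝ) + 1),
      HasDerivAt V (∑ i ∈ Finset.Icc 1 n, s (i : ℤ)) x)
    (hslopeNeg : ∀ n : ℕ, ∀ x ∈ Set.Ioo (-(n : ℝ) - 1) (-(n : ℝ)),
      HasDerivAt V (-∑ i ∈ Finset.range (n + 1), s (-(i : ℤ))) x) :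
    ∀ m : ℤ, ∀ k : ℕ,
      |V ((m : ℝ) + k) + V ((m : ℝ) - k) - 2 * V (m : ℝ)| ≤ C * k := by
  -- the slope of `V` on `(n, n+1)`
  set D : ℤ → ℝ := fun n =>
    if 0 ≤ n then ∑ i ∈ Finset.Icc 1 n.toNat, s (i : ℤ)
    else -∑ i ∈ Finset.range (-n).toNat, s (-(i : ℤ)) with hDdef
  -- mean value theorem helper
  have mvt : ∀ (a d : ℝ), (∀ x ∈ Set.Ioo a (a + 1), HasDerivAt V d x) →
      V (a + 1) - V a = d := by
    intro a d hd
    obtain ⟨c, _, hceq⟩ := exists_hasDerivAt_eq_slope V (fun _ => d)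
      (by linarith : a < a + 1) hcont.continuousOn hd
    simp at hceq
    linarith
  -- `V (n+1) - V n = D n`
  have key : ∀ n : ℤ, V ((n : ℝ) + 1) - V (n : ℝ) = D n := by
    intro n
    rcases lt_trichotomy n 0 with h | h | h
    · set nn : ℕ := (-n - 1).toNat with hnn
      have hnnz : (nn : ℤ) = -n - 1 := by
        rw [hnn]; exact Int.toNat_of_nonneg (by omega)
      have hnnr : -(nn : ℝ) - 1 = (n : ℝ) := by
        have : ((nn : ℤ) : ℝ) = ((-n - 1 : ℤ) : ℝ) := by rw [hnnz]
        push_cast at this ⊢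
        linarith
      have htn : (-n).toNat = nn + 1 := by omega
      have := mvt (n : ℝ) (-∑ i ∈ Finset.range (nn + 1), s (-(i : ℤ))) ?_
      · rw [this]
        simp only [hDdef]
        rw [if_neg (by omega : ¬ (0 : ℤ) ≤ n), htn]
      · intro x hx
        apply hslopeNeg nn
        rw [hnnr]
        constructor
        · exact hx.1
        · have := hx.2; linarith
    · subst h
      have h1 : V ((0 : ℤ) : ℝ) = 0 := hV01 _ (by norm_num)
      have h2 : V (((0 : ℤ) : ℝ) + 1) = 0 := hV01 _ (by norm_num)
      rw [h1, h2]
      simp [hDdef]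
    · set nn : ℕ := n.toNat with hnn
      have hnnz : (nn : ℤ) = n := Int.toNat_of_nonneg (by omega)
      have hnnr : ((nn : ℕ) : ℝ) = (n : ℝ) := by
        have : ((nn : ℤ) : ℝ) = ((n : ℤ) : ℝ) := by rw [hnnz]
        push_cast at this ⊢
        linarith
      have := mvt (n : ℝ) (∑ i ∈ Finset.Icc 1 nn, s (i : ℤ)) ?_
      · rw [this]
        simp only [hDdef]
        rw [if_pos (by omega)]
      · intro x hx
        apply hslopePos nn (by omega)
        rw [hnnr]
        exact hx
  -- jump relation : `D n - D (n-1) = s n`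
  have jump : ∀ n : ℤ, D n - D (n - 1) = s n := by
    intro n
    rcases lt_trichotomy n 0 with h | h | h
    · have h1 : ¬(0 ≤ n) := by omega
      have h2 : ¬(0 ≤ n - 1) := by omega
      simp only [hDdef, if_neg h1, if_neg h2]
      have ht : (-(n - 1)).toNat = (-n).toNat + 1 := by omega
      rw [ht, Finset.sum_range_succ]
      have : (-((-n).toNat : ℤ)) = n := by omega
      rw [this]
      ring
    · subst h
      simp only [hDdef, le_refl, if_pos]
      rw [if_neg (by omega : ¬ (0:ℤ) ≤ 0 - 1)]
      have : (-((0:ℤ) - 1)).toNat = 1 := by norm_num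
      rw [this]
      simp
    · have h1 : (0 : ℤ) ≤ n := by omega
      have h2 : (0 : ℤ) ≤ n - 1 := by omega
      simp only [hDdef, if_pos h1, if_pos h2]
      have ht : n.toNat = (n - 1).toNat + 1 := by omega
      rw [ht, Finset.sum_Icc_succ_top (by omega)]
      have : (((n - 1).toNat + 1 : ℕ) : ℤ) = n := by omega
      rw [this]
      ring
  intro m k
  -- symmetric difference of slopes
  have G : ∀ j : ℕ, D (m + j) - D (m - 1 - j)
      = s m + ∑ i ∈ Finset.Icc 1 j, (s (m + i) + s (m - i)) := by
    intro j
    induction j with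
    | zero => simpa using jump m
    | succ j ih =>
      have e1 : m + (↑(j + 1) : ℤ) = (m + j + 1) := by push_cast; ring
      have e2 : m - 1 - (↑(j + 1) : ℤ) = (m - 1 - j) - 1 := by push_cast; ring
      have j1 := jump (m + j + 1)
      have j2 := jump (m - 1 - j)
      have hs : (m + j + 1) - 1 = m + j := by ring
      rw [hs] at j1
      rw [e1, e2, Finset.sum_Icc_succ_top (by omega : 1 ≤ j + 1)]
      have e3 : m + (↑(j + 1) : ℤ) = m + j + 1 := by push_cast; ring
      have e4 : m - (↑(j + 1) : ℤ) = m - 1 - j := by push_cast; ring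
      rw [e3, e4]
      linarith
  -- second difference formula at integers
  have EV : ∀ k : ℕ, V ((m : ℝ) + k) + V ((m : ℝ) - k) - 2 * V (m : ℝ)
      = (k : ℝ) * s m + ∑ i ∈ Finset.Icc 1 k, ((k : ℝ) - i) * (s (m + i) + s (m - i)) := by
    intro k
    induction k with
    | zero => simp; ring
    | succ k ih =>
      have c1 : (m : ℝ) + ((k + 1 : ℕ) : ℝ) = ((m + k : ℤ) : ℝ) + 1 := by push_cast; ring
      have c2 : (m : ℝ) + (k : ℕ) = ((m + k : ℤ) : ℝ) := by push_cast; ring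
      have c3 : (m : ℝ) - (k : ℕ) = ((m - 1 - k : ℤ) : ℝ) + 1 := by push_cast; ring
      have c4 : (m : ℝ) - ((k + 1 : ℕ) : ℝ) = ((m - 1 - k : ℤ) : ℝ) := by push_cast; ring
      have k1 := key (m + k)
      have k2 := key (m - 1 - k)
      have hG := G k
      have e1 : V ((m : ℝ) + ((k + 1 : ℕ) : ℝ)) = V ((m : ℝ) + (k : ℕ)) + D (m + k) := by
        rw [c1, c2]; linarith
      have e2 : V ((m : ℝ) - ((k + 1 : ℕ) : ℝ)) = V ((m : ℝ) - (k : ℕ)) - D (m - 1 - k) := by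
        rw [c4, c3]; linarith
      have hsum : ∑ i ∈ Finset.Icc 1 (k + 1), (((k + 1 : ℕ) : ℝ) - i) * (s (m + i) + s (m - i))
          = ∑ i ∈ Finset.Icc 1 k, ((k : ℝ) - i) * (s (m + i) + s (m - i))
            + ∑ i ∈ Finset.Icc 1 k, (s (m + i) + s (m - i)) := by
        have step : ∑ i ∈ Finset.Icc 1 k, (((k + 1 : ℕ) : ℝ) - (i : ℕ)) * (s (m + i) + s (m - i))
            = ∑ i ∈ Finset.Icc 1 k, (((k : ℝ) - i) * (s (m + i) + s (m - i)) + (s (m + i) + s (m - i))) :=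
          Finset.sum_congr rfl fun i _ => by push_cast; ring
        rw [Finset.sum_Icc_succ_top (by omega : 1 ≤ k + 1), step, Finset.sum_add_distrib]
        push_cast
        ring
      push_cast at e1 e2 hsum ⊢
      rw [e1, e2, hsum]
      linarith
  rcases Nat.eq_zero_or_pos k with hk | hk
  · subst hk; simp; ring
  · have hf := hfan m k hk
    have hk0 : (0 : ℝ) < k := by exact_mod_cast hk
    have heq : s m + ∑ i ∈ Finset.Icc 1 k, ((k : ℝ) - i) / k * (s (m + i) + s (m - i))
        = (V ((m : ℝ) + k) + V ((m : ℝ) - k) - 2 * V (m : ℝ)) / k := by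
      rw [EV k, add_div, Finset.sum_div, mul_div_cancel_left₀ _ (ne_of_gt hk0)]
      congr 1
      exact Finset.sum_congr rfl fun i _ => by ring
    rw [heq, abs_div, abs_of_pos hk0, div_le_iff₀ hk0] at hf
    linarith
end

section
/- Let V : ℝ → ℝ be continuous and piecewise linear with breakpoints at the integers, and suppose the difference of slopes at each breakpoint is bounded by S in absolute value, and |V(m+k)+V(m−k)−2V(m)| ≤ C·k for all integers m and k ≥ 0. Then |V(x+t)+V(x−t)−2V(x)| ≤ (2C + 18S)·t for all x ∈ ℝ and t > 0. -/
open Set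

private lemma hat_eq (s t : ℝ) (ht : 0 ≤ t) :
    max (s + t) 0 + max (s - t) 0 - 2 * max s 0 = max (t - |s|) 0 := by
  rcases le_total s 0 with hs | hs
  · rw [abs_of_nonpos hs, max_eq_right hs]
    rcases le_total (s + t) 0 with h | h
    · rw [max_eq_right h, max_eq_right (by linarith : s - t ≤ 0),
        max_eq_right (by linarith : t - -s ≤ 0)]
      ring
    · rw [max_eq_left h, max_eq_right (by linarith : s - t ≤ 0),
        max_eq_left (by linarith : (0:ℝ) ≤ t - -s)]
      ring
  · rw [abs_of_nonneg hs, max_eq_left hs]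
    rcases le_total (s - t) 0 with h | h
    · rw [max_eq_right h, max_eq_left (by linarith : (0:ℝ) ≤ s + t),
        max_eq_left (by linarith : (0:ℝ) ≤ t - s)]
      ring
    · rw [max_eq_left h, max_eq_left (by linarith : (0:ℝ) ≤ s + t),
        max_eq_right (by linarith : t - s ≤ 0)]
      ring

private lemma tel (c : ℤ → ℝ) (a : ℤ) : ∀ K : ℕ,
    c (a + (K : ℤ)) = c a + ∑ i ∈ Finset.range K, (c (a + 1 + (i : ℤ)) - c (a + (i : ℤ))) := by
  intro K
  induction K with
  | zero => simp
  | succ K ih =>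
      rw [Finset.sum_range_succ, show (a + ((K + 1 : ℕ) : ℤ)) = a + 1 + (K : ℤ) from by
        push_cast; ring]
      linarith [ih]

private lemma rep (V : ℝ → ℝ) (c : ℤ → ℝ)
    (haff : ∀ n : ℤ, ∀ x ∈ Set.Icc (n : ℝ) ((n : ℝ) + 1),
      V x = V (n : ℝ) + c n * (x - n)) (K : ℕ) :
    ∀ (a : ℤ) (y : ℝ), (a : ℝ) ≤ y → y ≤ (a : ℝ) + K →
      V y = V a + c a * (y - a)
        + ∑ i ∈ Finset.range K,
            (c (a + 1 + (i : ℤ)) - c (a + (i : ℤ))) * max (y - ((a : ℝ) + 1 + (i : ℕ))) 0 := by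
  induction K with
  | zero =>
      intro a y hy1 hy2
      have : y = (a : ℝ) := le_antisymm (by simpa using hy2) hy1
      subst this
      simp
  | succ K ih =>
      intro a y hy1 hy2
      have hy2' : y ≤ (a : ℝ) + K + 1 := by push_cast at hy2; linarith
      rcases le_total y ((a : ℝ) + K) with h | h
      · have hIH := ih a y hy1 h
        rw [Finset.sum_range_succ, hIH,
          max_eq_right (by push_cast; linarith : y - ((a : ℝ) + 1 + (K : ℕ)) ≤ 0)]
        ring
      · have hVy : V y = V ((a + (K : ℤ) : ℤ) : ℝ) + c (a + (K : ℤ)) * (y - ((a + (K : ℤ) : ℤ) : ℝ)) := by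
          apply haff (a + (K : ℤ)) y
          constructor
          · push_cast; linarith
          · push_cast; linarith
        push_cast at hVy
        have hVaK := ih a ((a : ℝ) + (K : ℝ)) (by
          have : (0:ℝ) ≤ (K : ℝ) := Nat.cast_nonneg K
          linarith) le_rfl
        have htel := tel c a K
        have e0 : ∑ i ∈ Finset.range (K + 1),
              (c (a + 1 + (i : ℤ)) - c (a + (i : ℤ))) * max (y - ((a : ℝ) + 1 + (i : ℕ))) 0
            = ∑ i ∈ Finset.range K,
              (c (a + 1 + (i : ℤ)) - c (a + (i : ℤ))) * (y - ((a : ℝ) + 1 + (i : ℕ))) := by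
          rw [Finset.sum_range_succ,
            max_eq_right (by push_cast; linarith : y - ((a : ℝ) + 1 + (K : ℕ)) ≤ 0),
            mul_zero, add_zero]
          refine Finset.sum_congr rfl fun i hi => ?_
          have h1 : (i : ℝ) + 1 ≤ (K : ℝ) := by exact_mod_cast Finset.mem_range.mp hi
          rw [max_eq_left (by linarith)]
        have e2 : ∑ i ∈ Finset.range K,
              (c (a + 1 + (i : ℤ)) - c (a + (i : ℤ))) * max ((a : ℝ) + (K : ℝ) - ((a : ℝ) + 1 + (i : ℕ))) 0
            = ∑ i ∈ Finset.range K,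
              (c (a + 1 + (i : ℤ)) - c (a + (i : ℤ))) * ((a : ℝ) + (K : ℝ) - ((a : ℝ) + 1 + (i : ℕ))) := by
          refine Finset.sum_congr rfl fun i hi => ?_
          have h1 : (i : ℝ) + 1 ≤ (K : ℝ) := by exact_mod_cast Finset.mem_range.mp hi
          rw [max_eq_left (by linarith)]
        have hsum : ∑ i ∈ Finset.range K,
              (c (a + 1 + (i : ℤ)) - c (a + (i : ℤ))) * (y - ((a : ℝ) + 1 + (i : ℕ)))
            = ∑ i ∈ Finset.range K,
                (c (a + 1 + (i : ℤ)) - c (a + (i : ℤ))) * ((a : ℝ) + (K : ℝ) - ((a : ℝ) + 1 + (i : ℕ)))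
              + (∑ i ∈ Finset.range K, (c (a + 1 + (i : ℤ)) - c (a + (i : ℤ)))) * (y - (a : ℝ) - (K : ℝ)) := by
          rw [Finset.sum_mul, ← Finset.sum_add_distrib]
          exact Finset.sum_congr rfl fun i _ => by ring
        rw [e0]
        rw [e2] at hVaK
        linear_combination hVy + hVaK + (y - (a : ℝ) - (K : ℝ)) * htel - hsum

/-- Transfer from the integer-point second-difference bound to the full Zygmund condition,
for a continuous piecewise linear function with breakpoints at the integers and slope
jumps bounded by `S`. -/
theorem integer_second_difference_to_zygmund
    (C S : ℝ) (V : ℝ → ℝ) (c : ℤ → ℝ)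
    (hcont : Continuous V)
    (haff : ∀ n : ℤ, ∀ x ∈ Set.Icc (n : ℝ) ((n : ℝ) + 1),
      V x = V (n : ℝ) + c n * (x - n))
    (hjump : ∀ n : ℤ, |c n - c (n - 1)| ≤ S)
    (hsec : ∀ m : ℤ, ∀ k : ℕ,
      |V ((m : ℝ) + k) + V ((m : ℝ) - k) - 2 * V (m : ℝ)| ≤ C * k) :
    ∀ x : ℝ, ∀ t : ℝ, 0 < t →
      |V (x + t) + V (x - t) - 2 * V x| ≤ (2 * C + 18 * S) * t := by
  have hS : 0 ≤ S := (abs_nonneg _).trans (hjump 0)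
  have hC : 0 ≤ C := by
    have h := (abs_nonneg _).trans (hsec 0 1)
    simpa using h
  have hj : ∀ n : ℤ, ∀ i : ℕ, |c (n + 1 + (i : ℤ)) - c (n + (i : ℤ))| ≤ S := by
    intro n i
    have h := hjump (n + 1 + (i : ℤ))
    rwa [show n + 1 + (i : ℤ) - 1 = n + (i : ℤ) from by ring] at h
  -- key second-difference representation
  have key : ∀ (a : ℤ) (K : ℕ) (u s : ℝ), 0 ≤ s → (a : ℝ) ≤ u - s → u + s ≤ (a : ℝ) + K →
      V (u + s) + V (u - s) - 2 * V u
        = ∑ i ∈ Finset.range K,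
            (c (a + 1 + (i : ℤ)) - c (a + (i : ℤ))) * max (s - |u - ((a : ℝ) + 1 + (i : ℕ))|) 0 := by
    intro a K u s hs h1 h2
    have r1 := rep V c haff K a (u + s) (by linarith) (by linarith)
    have r2 := rep V c haff K a (u - s) (by linarith) (by linarith)
    have r3 := rep V c haff K a u (by linarith) (by linarith)
    have comb : ∑ i ∈ Finset.range K,
          (c (a + 1 + (i : ℤ)) - c (a + (i : ℤ)))
            * (max (u + s - ((a : ℝ) + 1 + (i : ℕ))) 0 + max (u - s - ((a : ℝ) + 1 + (i : ℕ))) 0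
                - 2 * max (u - ((a : ℝ) + 1 + (i : ℕ))) 0)
        = ∑ i ∈ Finset.range K,
          (c (a + 1 + (i : ℤ)) - c (a + (i : ℤ))) * max (s - |u - ((a : ℝ) + 1 + (i : ℕ))|) 0 := by
      refine Finset.sum_congr rfl fun i _ => ?_
      rw [show u + s - ((a : ℝ) + 1 + (i : ℕ)) = (u - ((a : ℝ) + 1 + (i : ℕ))) + s from by ring,
        show u - s - ((a : ℝ) + 1 + (i : ℕ)) = (u - ((a : ℝ) + 1 + (i : ℕ))) - s from by ring,
        hat_eq (u - ((a : ℝ) + 1 + (i : ℕ))) s hs]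
    have dist : ∑ i ∈ Finset.range K,
          (c (a + 1 + (i : ℤ)) - c (a + (i : ℤ)))
            * (max (u + s - ((a : ℝ) + 1 + (i : ℕ))) 0 + max (u - s - ((a : ℝ) + 1 + (i : ℕ))) 0
                - 2 * max (u - ((a : ℝ) + 1 + (i : ℕ))) 0)
        = ∑ i ∈ Finset.range K,
            (c (a + 1 + (i : ℤ)) - c (a + (i : ℤ))) * max (u + s - ((a : ℝ) + 1 + (i : ℕ))) 0
          + ∑ i ∈ Finset.range K,
            (c (a + 1 + (i : ℤ)) - c (a + (i : ℤ))) * max (u - s - ((a : ℝ) + 1 + (i : ℕ))) 0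
          - 2 * ∑ i ∈ Finset.range K,
            (c (a + 1 + (i : ℤ)) - c (a + (i : ℤ))) * max (u - ((a : ℝ) + 1 + (i : ℕ))) 0 := by
      rw [Finset.mul_sum, ← Finset.sum_add_distrib, ← Finset.sum_sub_distrib]
      exact Finset.sum_congr rfl fun i _ => by ring
    linear_combination r1 + r2 - 2 * r3 + comb - dist
  intro x t ht
  rcases le_total t 1 with htle | htge
  · -- small t : at most three kinks, each contributes at most S * t
    set a : ℤ := ⌊x - t⌋ with ha_def
    have ha1 : (a : ℝ) ≤ x - t := Int.floor_le _
    have ha2 : x - t < (a : ℝ) + 1 := Int.lt_floor_add_one _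
    have E1 := key a 3 x t ht.le ha1 (by push_cast; linarith)
    rw [E1]
    have hterm : ∀ i ∈ Finset.range 3,
        |(c (a + 1 + (i : ℤ)) - c (a + (i : ℤ))) * max (t - |x - ((a : ℝ) + 1 + (i : ℕ))|) 0| ≤ S * t := by
      intro i _
      rw [abs_mul]
      refine mul_le_mul (hj a i) ?_ (abs_nonneg _) hS
      rw [abs_of_nonneg (le_max_right _ _)]
      exact max_le (by linarith [abs_nonneg (x - ((a : ℝ) + 1 + (i : ℕ)))]) ht.le
    calc |∑ i ∈ Finset.range 3,
            (c (a + 1 + (i : ℤ)) - c (a + (i : ℤ))) * max (t - |x - ((a : ℝ) + 1 + (i : ℕ))|) 0|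
        ≤ ∑ i ∈ Finset.range 3,
            |(c (a + 1 + (i : ℤ)) - c (a + (i : ℤ))) * max (t - |x - ((a : ℝ) + 1 + (i : ℕ))|) 0| :=
          Finset.abs_sum_le_sum_abs _ _
      _ ≤ ∑ _i ∈ Finset.range 3, S * t := Finset.sum_le_sum hterm
      _ = 3 * (S * t) := by
          rw [Finset.sum_const, Finset.card_range, nsmul_eq_mul]
          norm_num
      _ ≤ (2 * C + 18 * S) * t := by nlinarith [mul_nonneg hC ht.le, mul_nonneg hS ht.le]
  · -- large t : compare with integer second difference
    set m : ℤ := ⌊x⌋ with hm_def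
    set k : ℕ := ⌈t⌉₊ with hk_def
    set a : ℤ := ⌊x - t⌋ - 2 with ha_def
    set K : ℕ := ⌈2 * t⌉₊ + 4 with hK_def
    have hm1 : (m : ℝ) ≤ x := Int.floor_le _
    have hm2 : x < (m : ℝ) + 1 := Int.lt_floor_add_one _
    have hk1 : t ≤ (k : ℝ) := Nat.le_ceil t
    have hk2 : (k : ℝ) < t + 1 := Nat.ceil_lt_add_one ht.le
    have ha1 : (a : ℝ) ≤ x - t - 2 := by
      rw [ha_def]; push_cast
      linarith [Int.floor_le (x - t)]
    have ha2 : x - t - 3 < (a : ℝ) := by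
      rw [ha_def]; push_cast
      linarith [Int.lt_floor_add_one (x - t)]
    have hK1 : 2 * t + 4 ≤ (K : ℝ) := by
      rw [hK_def]; push_cast
      linarith [Nat.le_ceil (2 * t)]
    have hK2 : (K : ℝ) < 2 * t + 5 := by
      rw [hK_def]; push_cast
      linarith [Nat.ceil_lt_add_one (by linarith : (0:ℝ) ≤ 2 * t)]
    have E1 := key a K x t ht.le (by linarith) (by linarith)
    have E2 := key a K (m : ℝ) (k : ℝ) (Nat.cast_nonneg k) (by linarith) (by linarith)
    have hIso := hsec m k
    rw [E2] at hIso
    have hdiff : |∑ i ∈ Finset.range K,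
            (c (a + 1 + (i : ℤ)) - c (a + (i : ℤ))) * max (t - |x - ((a : ℝ) + 1 + (i : ℕ))|) 0
        - ∑ i ∈ Finset.range K,
            (c (a + 1 + (i : ℤ)) - c (a + (i : ℤ))) * max ((k : ℝ) - |(m : ℝ) - ((a : ℝ) + 1 + (i : ℕ))|) 0|
        ≤ (K : ℝ) * (S * 2) := by
      rw [← Finset.sum_sub_distrib]
      refine (Finset.abs_sum_le_sum_abs _ _).trans ?_
      have hper : ∀ i ∈ Finset.range K,
          |(c (a + 1 + (i : ℤ)) - c (a + (i : ℤ))) * max (t - |x - ((a : ℝ) + 1 + (i : ℕ))|) 0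
            - (c (a + 1 + (i : ℤ)) - c (a + (i : ℤ))) * max ((k : ℝ) - |(m : ℝ) - ((a : ℝ) + 1 + (i : ℕ))|) 0|
          ≤ S * 2 := by
        intro i _
        rw [← mul_sub, abs_mul]
        refine mul_le_mul (hj a i) ?_ (abs_nonneg _) hS
        set n : ℝ := (a : ℝ) + 1 + (i : ℕ) with hn_def
        have l1 : |max (t - |x - n|) 0 - max ((k : ℝ) - |(m : ℝ) - n|) 0|
            ≤ |(t - |x - n|) - ((k : ℝ) - |(m : ℝ) - n|)| := abs_max_sub_max_le_abs _ _ _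
        have l2 : |(|x - n| - |(m : ℝ) - n|)| ≤ |x - (m : ℝ)| := by
          have h := abs_abs_sub_abs_le_abs_sub (x - n) ((m : ℝ) - n)
          rwa [show x - n - ((m : ℝ) - n) = x - (m : ℝ) from by ring] at h
        have l3 : |(t - |x - n|) - ((k : ℝ) - |(m : ℝ) - n|)|
            ≤ |t - (k : ℝ)| + |(|x - n| - |(m : ℝ) - n|)| := by
          have h := abs_add_le (t - (k : ℝ)) (|(m : ℝ) - n| - |x - n|)
          rw [show t - (k : ℝ) + (|(m : ℝ) - n| - |x - n|)
              = (t - |x - n|) - ((k : ℝ) - |(m : ℝ) - n|) from by ring] at h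
          rw [abs_sub_comm (|x - n|) (|(m : ℝ) - n|)]
          exact h
        have l4 : |t - (k : ℝ)| ≤ 1 := abs_le.mpr ⟨by linarith, by linarith⟩
        have l5 : |x - (m : ℝ)| ≤ 1 := abs_le.mpr ⟨by linarith, by linarith⟩
        calc |max (t - |x - n|) 0 - max ((k : ℝ) - |(m : ℝ) - n|) 0|
            ≤ |t - (k : ℝ)| + |(|x - n| - |(m : ℝ) - n|)| := l1.trans l3
          _ ≤ 1 + 1 := add_le_add l4 (l2.trans l5)
          _ = 2 := by norm_num
      calc ∑ i ∈ Finset.range K,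
            |(c (a + 1 + (i : ℤ)) - c (a + (i : ℤ))) * max (t - |x - ((a : ℝ) + 1 + (i : ℕ))|) 0
              - (c (a + 1 + (i : ℤ)) - c (a + (i : ℤ))) * max ((k : ℝ) - |(m : ℝ) - ((a : ℝ) + 1 + (i : ℕ))|) 0|
          ≤ ∑ _i ∈ Finset.range K, S * 2 := Finset.sum_le_sum hper
        _ = (K : ℝ) * (S * 2) := by rw [Finset.sum_const, Finset.card_range, nsmul_eq_mul]
    rw [E1]
    calc |∑ i ∈ Finset.range K,
            (c (a + 1 + (i : ℤ)) - c (a + (i : ℤ))) * max (t - |x - ((a : ℝ) + 1 + (i : ℕ))|) 0|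
        ≤ |∑ i ∈ Finset.range K,
            (c (a + 1 + (i : ℤ)) - c (a + (i : ℤ))) * max ((k : ℝ) - |(m : ℝ) - ((a : ℝ) + 1 + (i : ℕ))|) 0|
          + |∑ i ∈ Finset.range K,
            (c (a + 1 + (i : ℤ)) - c (a + (i : ℤ))) * max (t - |x - ((a : ℝ) + 1 + (i : ℕ))|) 0
            - ∑ i ∈ Finset.range K,
            (c (a + 1 + (i : ℤ)) - c (a + (i : ℤ))) * max ((k : ℝ) - |(m : ℝ) - ((a : ℝ) + 1 + (i : ℕ))|) 0| := by
          have := abs_add_le (∑ i ∈ Finset.range K,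
            (c (a + 1 + (i : ℤ)) - c (a + (i : ℤ))) * max ((k : ℝ) - |(m : ℝ) - ((a : ℝ) + 1 + (i : ℕ))|) 0)
            (∑ i ∈ Finset.range K,
            (c (a + 1 + (i : ℤ)) - c (a + (i : ℤ))) * max (t - |x - ((a : ℝ) + 1 + (i : ℕ))|) 0
            - ∑ i ∈ Finset.range K,
            (c (a + 1 + (i : ℤ)) - c (a + (i : ℤ))) * max ((k : ℝ) - |(m : ℝ) - ((a : ℝ) + 1 + (i : ℕ))|) 0)
          simpa using this
      _ ≤ C * (k : ℝ) + (K : ℝ) * (S * 2) := add_le_add hIso hdiff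
      _ ≤ (2 * C + 18 * S) * t := by
          nlinarith [mul_nonneg hC (by linarith : (0:ℝ) ≤ t - 1),
            mul_nonneg hS (by linarith : (0:ℝ) ≤ t - 1),
            mul_le_mul_of_nonneg_left hk2.le hC,
            mul_le_mul_of_nonneg_left hK2.le hS]
end

section
/- Let ṡ : ℤ → ℝ satisfy the fan condition: for some C > 0, |ṡ(m) + Σ_{i=1}^{k} ((k−i)/k)[ṡ(m+i)+ṡ(m−i)]| ≤ C for all m ∈ ℤ, k ≥ 1. Then Σ_{i=k}^{k+n} ṡ(i) = o(n) as n → ∞, for each fixed k ∈ ℤ. -/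
open Filter Finset

/-! Write `B_j(m) = ∑_{|x - m| ≤ j} ṡ(x)` for the box sums. Multiplying the fan condition by `k`
shows that `∑_{j < k} B_j(m)` is `O(k)` uniformly in `m`, while consecutive box sums differ by
`O(1)` because `ṡ` is bounded (the case `k = 1`). Averaging `B_j` over `K ≤ j < K + l` with
`l ≈ √K` then gives `B_K(m) = O(√K)`, and a partial sum of `ṡ` over an interval is a box sum up
to one term. -/

def boxSum (s : ℤ → ℝ) (m : ℤ) (j : ℕ) : ℝ := ∑ i ∈ range (2 * j + 1), s (m - j + i)

theorem boxSum_succ (s : ℤ → ℝ) (m : ℤ) (j : ℕ) :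
    boxSum s m (j + 1) = boxSum s m j + (s (m + (j + 1)) + s (m - (j + 1))) := by
  simp only [boxSum, show 2 * (j + 1) + 1 = 2 * j + 1 + 1 + 1 by ring, sum_range_succ,
    sum_range_succ' _ (2 * j + 1)]
  push_cast
  ring_nf

theorem boxSum_eq_add_sum_Icc (s : ℤ → ℝ) (m : ℤ) (j : ℕ) :
    boxSum s m j = s m + ∑ i ∈ Icc 1 j, (s (m + i) + s (m - i)) := by
  induction j with
  | zero => simp [boxSum]
  | succ j ih => rw [boxSum_succ, ih, sum_Icc_succ_top (by omega)]; push_cast; ring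

theorem sum_range_boxSum (s : ℤ → ℝ) (m : ℤ) (K : ℕ) :
    ∑ j ∈ range K, boxSum s m j =
      K * s m + ∑ i ∈ Icc 1 K, (K - i : ℝ) * (s (m + i) + s (m - i)) := by
  induction K with
  | zero => simp
  | succ K ih =>
    have hcoeff : ∀ i ∈ Icc 1 K, ((K + 1 : ℕ) - i : ℝ) * (s (m + i) + s (m - i)) =
        (K - i : ℝ) * (s (m + i) + s (m - i)) + (s (m + i) + s (m - i)) := by
      intros; push_cast; ring
    rw [sum_range_succ, ih, boxSum_eq_add_sum_Icc, sum_Icc_succ_top (by omega),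
      sum_congr rfl hcoeff]
    simp only [sum_add_distrib]
    push_cast
    ring

theorem abs_sum_range_boxSum_le {C : ℝ} {s : ℤ → ℝ}
    (hfan : ∀ m : ℤ, ∀ k : ℕ, 1 ≤ k →
      |s m + ∑ i ∈ Finset.Icc 1 k, ((k : ℝ) - i) / k * (s (m + i) + s (m - i))| ≤ C)
    (m : ℤ) (K : ℕ) : |∑ j ∈ range K, boxSum s m j| ≤ K * C := by
  rcases Nat.eq_zero_or_pos K with rfl | hK
  · simp
  have hK' : (0 : ℝ) < K := by exact_mod_cast hK
  have hnorm : ∑ j ∈ range K, boxSum s m j =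
      K * (s m + ∑ i ∈ Icc 1 K, ((K : ℝ) - i) / K * (s (m + i) + s (m - i))) := by
    rw [sum_range_boxSum, mul_add, mul_sum]
    congr 1
    refine sum_congr rfl fun i _ => ?_
    field_simp
  rw [hnorm, abs_mul, Nat.abs_cast]
  exact mul_le_mul_of_nonneg_left (hfan m K hK) hK'.le

theorem abs_sub_le_mul_of_abs_succ_sub_le {b : ℕ → ℝ} {D : ℝ} (h : ∀ j, |b (j + 1) - b j| ≤ D)
    (K j : ℕ) : |b (K + j) - b K| ≤ j * D := by
  induction j with
  | zero => simp
  | succ j ih =>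
    calc |b (K + (j + 1)) - b K| ≤ |b (K + j + 1) - b (K + j)| + |b (K + j) - b K| :=
          abs_sub_le ..
      _ ≤ (j + 1 : ℕ) * D := by push_cast; linarith [h (K + j)]

theorem mul_abs_le_of_abs_sum_range_le {b : ℕ → ℝ} {C D : ℝ}
    (hsum : ∀ K, |∑ j ∈ range K, b j| ≤ K * C) (hstep : ∀ j, |b (j + 1) - b j| ≤ D) (K l : ℕ) :
    l * |b K| ≤ (2 * K + l) * C + l * l * D := by
  have hD : 0 ≤ D := (abs_nonneg _).trans (hstep 0)
  have hsplit : (l : ℝ) * b K = (∑ j ∈ range (K + l), b j - ∑ j ∈ range K, b j) -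
      ∑ j ∈ range l, (b (K + j) - b K) := by
    rw [sum_range_add, sum_sub_distrib, sum_const, card_range, nsmul_eq_mul]
    ring
  have hdev : |∑ j ∈ range l, (b (K + j) - b K)| ≤ l * l * D :=
    calc |∑ j ∈ range l, (b (K + j) - b K)| ≤ ∑ j ∈ range l, |b (K + j) - b K| :=
          abs_sum_le_sum_abs _ _
      _ ≤ ∑ _j ∈ range l, (l * D : ℝ) := by
          refine sum_le_sum fun j hj => (abs_sub_le_mul_of_abs_succ_sub_le hstep K j).trans ?_
          gcongr
          exact_mod_cast (mem_range.mp hj).le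
      _ = l * l * D := by rw [sum_const, card_range, nsmul_eq_mul, mul_assoc]
  have h1 := hsum (K + l)
  have h2 := hsum K
  have habs : (l : ℝ) * |b K| = |l * b K| := by rw [abs_mul, Nat.abs_cast]
  rw [habs, hsplit]
  push_cast at h1
  calc _ ≤ |∑ j ∈ range (K + l), b j - ∑ j ∈ range K, b j| + |∑ j ∈ range l, (b (K + j) - b K)| :=
        abs_sub _ _
    _ ≤ |∑ j ∈ range (K + l), b j| + |∑ j ∈ range K, b j| + l * l * D := by
        gcongr; exact abs_sub _ _
    _ ≤ _ := by linarith

theorem abs_le_of_abs_sum_range_le {b : ℕ → ℝ} {C D : ℝ}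
    (hsum : ∀ K, |∑ j ∈ range K, b j| ≤ K * C) (hstep : ∀ j, |b (j + 1) - b j| ≤ D) (K : ℕ) :
    |b K| ≤ (2 * C + D) * (√K + 1) + C := by
  have hC : 0 ≤ C := by simpa using (abs_nonneg _).trans (hsum 1)
  have hD : 0 ≤ D := (abs_nonneg _).trans (hstep 0)
  set l := Nat.sqrt K + 1 with hl
  have hl0 : (0 : ℝ) < l := by positivity
  have hKl : (K : ℝ) < l * l := by exact_mod_cast Nat.lt_succ_sqrt K
  have hlK : (l : ℝ) ≤ √K + 1 := by
    rw [hl]; push_cast; gcongr; exact Real.nat_sqrt_le_real_sqrt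
  have hmain := mul_abs_le_of_abs_sum_range_le hsum hstep K l
  have hbound : |b K| ≤ (2 * C + D) * l + C := by
    refine le_of_mul_le_mul_left (hmain.trans ?_) hl0
    nlinarith
  calc |b K| ≤ (2 * C + D) * l + C := hbound
    _ ≤ (2 * C + D) * (√K + 1) + C := by gcongr

theorem tendsto_div_natCast_zero_of_abs_le_sqrt {u : ℕ → ℝ} {A B : ℝ}
    (h : ∀ n, |u n| ≤ A * √n + B) : Tendsto (fun n => u n / n) atTop (nhds 0) := by
  have hlim : Tendsto (fun n : ℕ => A * (√n)⁻¹ + B * (n : ℝ)⁻¹) atTop (nhds 0) := by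
    simpa using ((tendsto_inv_atTop_zero.comp (Real.tendsto_sqrt_atTop.comp
      tendsto_natCast_atTop_atTop)).const_mul A).add (tendsto_inv_atTop_nhds_zero_nat.const_mul B)
  refine squeeze_zero_norm' ?_ hlim
  filter_upwards [eventually_gt_atTop 0] with n hn
  have hn' : (0 : ℝ) < n := by exact_mod_cast hn
  rw [Real.norm_eq_abs, abs_div, Nat.abs_cast, ← Real.sqrt_div_self, div_le_iff₀ hn']
  calc |u n| ≤ A * √n + B := h n
    _ = (A * (√n / n) + B * (n : ℝ)⁻¹) * n := by field_simp

theorem sum_range_two_mul_add_one_eq_boxSum (s : ℤ → ℝ) (k : ℤ) (t : ℕ) :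
    ∑ i ∈ range (2 * t + 1), s (k + i) = boxSum s (k + t) t := by
  simp only [boxSum, add_sub_cancel_right]

theorem abs_sum_range_le_of_abs_boxSum_le {s : ℤ → ℝ} {A B C : ℝ} (hA : 0 ≤ A)
    (hs : ∀ m, |s m| ≤ C) (hbox : ∀ m j, |boxSum s m j| ≤ A * √j + B) (k : ℤ) (n : ℕ) :
    |∑ i ∈ range (n + 1), s (k + i)| ≤ A * √n + (B + C) := by
  have hC : 0 ≤ C := (abs_nonneg _).trans (hs 0)
  obtain ⟨t, rfl | rfl⟩ := Nat.even_or_odd' n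
  · have hsqrt : A * √t ≤ A * √(2 * t : ℕ) := by gcongr; omega
    rw [sum_range_two_mul_add_one_eq_boxSum]
    linarith [hbox (k + t) t]
  · have hsqrt : A * √t ≤ A * √(2 * t + 1 : ℕ) := by gcongr; omega
    rw [sum_range_succ, sum_range_two_mul_add_one_eq_boxSum]
    linarith [abs_add_le (boxSum s (k + t) t) (s (k + (2 * t + 1 : ℕ))), hbox (k + t) t,
      hs (k + (2 * t + 1 : ℕ))]

theorem fan_condition_partial_sums_littleo_general
    (C : ℝ) (s : ℤ → ℝ)
    (hfan : ∀ m : ℤ, ∀ k : ℕ, 1 ≤ k →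
      |s m + ∑ i ∈ Finset.Icc 1 k, ((k : ℝ) - i) / k * (s (m + i) + s (m - i))| ≤ C)
    (k : ℤ) :
    Tendsto (fun n : ℕ => (∑ i ∈ Finset.range (n + 1), s (k + i)) / n)
      atTop (nhds 0) := by
  have hs : ∀ m, |s m| ≤ C := fun m => by simpa using hfan m 1 le_rfl
  have hC : 0 ≤ C := (abs_nonneg _).trans (hs 0)
  have hstep : ∀ m j, |boxSum s m (j + 1) - boxSum s m j| ≤ 2 * C := fun m j => by
    rw [boxSum_succ, add_sub_cancel_left]
    linarith [abs_add_le (s (m + (j + 1))) (s (m - (j + 1))), hs (m + (j + 1)), hs (m - (j + 1))]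
  have hbox : ∀ m j, |boxSum s m j| ≤ 4 * C * √j + 5 * C := fun m j => by
    linarith [abs_le_of_abs_sum_range_le (abs_sum_range_boxSum_le hfan m) (hstep m) j]
  exact tendsto_div_natCast_zero_of_abs_le_sqrt
    (abs_sum_range_le_of_abs_boxSum_le (by positivity) hs hbox k)

/-- Lemma 5.5: the fan condition (10) on an infinitesimal shear function implies that
partial sums of shears along the fan grow sublinearly: `∑_{i=k}^{k+n} ṡ(i) = o(n)`. -/
theorem fan_condition_partial_sums_littleo
    (C : ℝ) (hC : 0 < C) (s : ℤ → ℝ)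
    (hfan : ∀ m : ℤ, ∀ k : ℕ, 1 ≤ k →
      |s m + ∑ i ∈ Finset.Icc 1 k, ((k : ℝ) - i) / k * (s (m + i) + s (m - i))| ≤ C)
    (k : ℤ) :
    Tendsto (fun n : ℕ => (∑ i ∈ Finset.range (n + 1), s (k + i)) / n)
      atTop (nhds 0) :=
  fan_condition_partial_sums_littleo_general C s hfan k
end

section
/- Let V : ℝ → ℝ satisfy the Zygmund condition with constant C and be normalized to vanish at 0 and 1 and satisfy V(x) = O(|x| log|x|) as |x| → ∞. Define the cross-ratio norm ‖V‖_cr = sup over quadruples a < b < c < d with (c−b)(d−a)/((b−a)(d−c)) = 1 of |(V(c)−V(b))/(c−b) + (V(d)−V(a))/(d−a) − (V(b)−V(a))/(b−a) − (V(d)−V(c))/(d−c)|. Then ‖V‖_cr ≤ 4C. -/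
/-!
Subtracting the chord of `V` over `[a, b]` leaves a Zygmund function with the same constant that
vanishes at `a` and `b`; reflecting a point where its modulus is maximal across the nearer endpoint
shows that it deviates from the chord by at most `C (b - a) / 2`. Under the cross-ratio condition
`(c - b)(d - a) = (b - a)(d - c)`, the cross-ratio distortion is an explicit combination of the
chord deviations of `b` in `[a, c]` and of `c` in `[b, d]`, whose weights add up to less than `3`.
-/

def IsZygmund (C : ℝ) (V : ℝ → ℝ) : Prop :=
  ∀ x t : ℝ, 0 < t → |V (x + t) + V (x - t) - 2 * V x| ≤ C * t

noncomputable def chordDeviation (V : ℝ → ℝ) (a b x : ℝ) : ℝ :=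
  V x - V a - (x - a) / (b - a) * (V b - V a)

namespace IsZygmund

variable {C : ℝ} {V : ℝ → ℝ}

theorem nonneg (hV : IsZygmund C V) : 0 ≤ C := by
  simpa using (abs_nonneg _).trans (hV 0 1 one_pos)

theorem sub_affine (hV : IsZygmund C V) (α β : ℝ) : IsZygmund C fun y => V y - (α + β * y) := by
  intro x t ht
  convert hV x t ht using 2
  ring

theorem abs_reflect_le (hV : IsZygmund C V) (x e : ℝ) :
    |V (2 * x - e) + V e - 2 * V x| ≤ C * |x - e| := by
  rcases lt_trichotomy e x with hex | rfl | hxe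
  · convert hV x (x - e) (sub_pos.2 hex) using 3 <;> ring_nf
    rw [abs_of_pos (sub_pos.2 hex)]
  · simp [show 2 * e - e = e by ring]; ring_nf
  · convert hV x (e - x) (sub_pos.2 hxe) using 2
    · ring_nf
    · rw [abs_sub_comm, abs_of_pos (sub_pos.2 hxe)]

theorem abs_le_of_reflect (hV : IsZygmund C V) {x e : ℝ} (he : V e = 0)
    (hmax : |V (2 * x - e)| ≤ |V x|) : |V x| ≤ C * |x - e| :=
  calc |V x| = |2 * V x| - |V x| := by rw [abs_mul, abs_two]; ring
    _ ≤ |2 * V x| - |V (2 * x - e)| := by gcongr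
    _ ≤ |2 * V x - V (2 * x - e)| := abs_sub_abs_le_abs_sub _ _
    _ = |V (2 * x - e) + V e - 2 * V x| := by rw [he, abs_sub_comm]; ring_nf
    _ ≤ C * |x - e| := hV.abs_reflect_le x e

theorem abs_le_of_eq_zero (hV : IsZygmund C V) (hcont : Continuous V) {a b x : ℝ} (hab : a ≤ b)
    (ha : V a = 0) (hb : V b = 0) (hx : x ∈ Set.Icc a b) : |V x| ≤ C / 2 * (b - a) := by
  obtain ⟨x₀, hx₀, hmax⟩ :=
    isCompact_Icc.exists_isMaxOn (Set.nonempty_Icc.2 hab) hcont.abs.continuousOn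
  obtain ⟨e, he, hreflect, hdist⟩ :
      ∃ e, V e = 0 ∧ 2 * x₀ - e ∈ Set.Icc a b ∧ |x₀ - e| ≤ (b - a) / 2 := by
    rcases le_total (x₀ - a) (b - x₀) with h | h
    · refine ⟨a, ha, ⟨by linarith [hx₀.1], by linarith⟩, ?_⟩
      rw [abs_of_nonneg (by linarith [hx₀.1])]; linarith
    · refine ⟨b, hb, ⟨by linarith, by linarith [hx₀.2]⟩, ?_⟩
      rw [abs_of_nonpos (by linarith [hx₀.2])]; linarith
  calc |V x| ≤ |V x₀| := hmax hx
    _ ≤ C * |x₀ - e| := hV.abs_le_of_reflect he (hmax hreflect)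
    _ ≤ C * ((b - a) / 2) := by gcongr; exact hV.nonneg
    _ = C / 2 * (b - a) := by ring

theorem abs_chordDeviation_le (hV : IsZygmund C V) (hcont : Continuous V) {a b x : ℝ} (hab : a < b)
    (hx : x ∈ Set.Icc a b) : |chordDeviation V a b x| ≤ C / 2 * (b - a) := by
  set m := (V b - V a) / (b - a)
  have hdev : chordDeviation V a b x = V x - ((V a - m * a) + m * x) := by
    unfold chordDeviation m; ring
  rw [hdev]
  refine (hV.sub_affine _ _).abs_le_of_eq_zero (by fun_prop) hab.le (by ring) ?_ hx
  simp only [m]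
  field_simp [sub_ne_zero.2 hab.ne']
  ring

end IsZygmund

theorem crossRatio_distortion_eq (V : ℝ → ℝ) {a b c d : ℝ} (hab : a < b) (hbc : b < c) (hcd : c < d)
    (hcr : (c - b) * (d - a) = (b - a) * (d - c)) :
    (V c - V b) / (c - b) + (V d - V a) / (d - a) - (V b - V a) / (b - a) - (V d - V c) / (d - c)
      = 2 * chordDeviation V b d c / (d - c) - 2 * chordDeviation V a c b / (b - a) := by
  have hab' : b - a ≠ 0 := by linarith
  have hbc' : c - b ≠ 0 := by linarith
  have hcd' : d - c ≠ 0 := by linarith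
  have had : d - a ≠ 0 := by linarith
  have hac : c - a ≠ 0 := by linarith
  have hbd : d - b ≠ 0 := by linarith
  -- Ptolemy: `(c - a)(d - b) = (c - b)(d - a) + (b - a)(d - c)`.
  have htwo : (c - a) * (d - b) / ((c - b) * (d - a)) = 2 := by
    rw [div_eq_iff (mul_ne_zero hbc' had)]
    linear_combination -hcr
  calc _ = (c - a) * (d - b) / ((c - b) * (d - a))
        * (chordDeviation V b d c / (d - c) - chordDeviation V a c b / (b - a)) := by
          unfold chordDeviation
          field_simp
          ring
    _ = _ := by rw [htwo]; ring

theorem crossRatio_weights_le {a b c d : ℝ} (hab : a < b) (hcd : c < d)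
    (hcr : (c - b) * (d - a) = (b - a) * (d - c)) :
    (d - b) / (d - c) + (c - a) / (b - a) ≤ 3 := by
  rw [div_add_div _ _ (sub_pos.2 hcd).ne' (sub_pos.2 hab).ne',
    div_le_iff₀ (mul_pos (sub_pos.2 hcd) (sub_pos.2 hab))]
  nlinarith [sq_nonneg (c - b)]

theorem cross_ratio_norm_le_four_zygmund_general
    (C : ℝ) (V : ℝ → ℝ)
    (hcont : Continuous V)
    (hzyg : ∀ x : ℝ, ∀ t : ℝ, 0 < t → |V (x + t) + V (x - t) - 2 * V x| ≤ C * t) :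
    ∀ a b c d : ℝ, a < b → b < c → c < d →
      (c - b) * (d - a) / ((b - a) * (d - c)) = 1 →
      |(V c - V b) / (c - b) + (V d - V a) / (d - a)
        - (V b - V a) / (b - a) - (V d - V c) / (d - c)| ≤ 4 * C := by
  intro a b c d hab hbc hcd hcr
  have hV : IsZygmund C V := hzyg
  have hp : 0 < b - a := sub_pos.2 hab
  have hr : 0 < d - c := sub_pos.2 hcd
  have hcr' : (c - b) * (d - a) = (b - a) * (d - c) :=
    (div_eq_one_iff_eq (mul_pos hp hr).ne').mp hcr
  have hε₁ := hV.abs_chordDeviation_le hcont (hab.trans hbc) ⟨hab.le, hbc.le⟩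
  have hε₂ := hV.abs_chordDeviation_le hcont (hbc.trans hcd) ⟨hbc.le, hcd.le⟩
  rw [crossRatio_distortion_eq V hab hbc hcd hcr']
  calc _ ≤ |2 * chordDeviation V b d c / (d - c)| + |2 * chordDeviation V a c b / (b - a)| :=
        abs_sub _ _
    _ ≤ C * (d - b) / (d - c) + C * (c - a) / (b - a) := by
        rw [abs_div, abs_div, abs_mul, abs_mul, abs_two, abs_of_pos hp, abs_of_pos hr]
        exact add_le_add (div_le_div_of_nonneg_right (by linarith) hr.le)
          (div_le_div_of_nonneg_right (by linarith) hp.le)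
    _ = C * ((d - b) / (d - c) + (c - a) / (b - a)) := by ring
    _ ≤ C * 3 := by gcongr; exacts [hV.nonneg, crossRatio_weights_le hab hcd hcr']
    _ ≤ 4 * C := by linarith [hV.nonneg]

/-- The cross-ratio norm of a normalized Zygmund vector field is bounded by four times
the Zygmund constant: for every quadruple `a < b < c < d` with cross-ratio
`(c−b)(d−a)/((b−a)(d−c)) = 1`, the cross-ratio distortion is at most `4C`. -/
theorem cross_ratio_norm_le_four_zygmund
    (C : ℝ) (hC : 0 < C) (V : ℝ → ℝ)
    (hcont : Continuous V)
    (hzyg : ∀ x : ℝ, ∀ t : ℝ, 0 < t → |V (x + t) + V (x - t) - 2 * V x| ≤ C * t)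
    (h0 : V 0 = 0) (h1 : V 1 = 0)
    (hgrowth : ∃ M R : ℝ, 0 < M ∧ 1 < R ∧
      ∀ x : ℝ, R ≤ |x| → |V x| ≤ M * |x| * Real.log |x|) :
    ∀ a b c d : ℝ, a < b → b < c → c < d →
      (c - b) * (d - a) / ((b - a) * (d - c)) = 1 →
      |(V c - V b) / (c - b) + (V d - V a) / (d - a)
        - (V b - V a) / (b - a) - (V d - V c) / (d - c)| ≤ 4 * C :=
  cross_ratio_norm_le_four_zygmund_general C V hcont hzyg
end
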